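/- arXiv:1108.0183 — 3 statements merged into one kernel-verified Lean document; each statement's English description precedes it below -/
import Mathlib

section
/- (Coffman's discrete Hartman–Wintner theorem.) Let Λ be a d×d complex diagonal invertible matrix with diagonal entries λ_1, …, λ_d, and let {A_n}_{n≥1} be d×d complex matrices such that Σ_{n=1}^∞ ‖A_n‖² < ∞ and Λ + A_n is invertible for every n. Fix an index j such that |λ_k| ≠ |λ_j| for all k ≠ j. Choose n_0 ≥ 1 so large that λ_j + (A_k)_{j,j} ≠ 0 for all k ≥ n_0 (possible since (A_n)_{j,j} → 0), and set γ_j(n) = Π_{k=n_0}^{n−1} (λ_j + (A_k)_{j,j}) for n > n_0. Then there exists an initial vector y_1 ∈ ℂ^d such that the solution of the recursion y_{n+1} = (Λ + A_n) y_n satisfies y_{n,j}/γ_j(n) → 1 as n → ∞ and y_{n,k}/γ_j(n) → 0 as n → ∞ for every k ≠ j. -/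
/-!
Put `c n = λ_j + (A n) j j` and `z n = y n / γ_j(n)`. Then `c n • z (n + 1) = (Λ + A n) z n`, that is
`z (n + 1) = (D n + R n) z n` with `D n` diagonal, `D n j = 1`, `D n k = λ_k / c n → λ_k / λ_j` of
modulus `≠ 1`, and `R n` square summable with `R n j j = 0`. From some time on, every coordinate
`k ≠ j` of `D` is uniformly contracting or uniformly expanding at a rate `θ < 1`. Solving each scalar
recursion `x (n + 1) = d n * x n + f n` by summing from the past (contracting coordinates) or from the
future (the others, `j` included) turns the system into `z = e_j + T (R z)`. In the sup norm with
weight `1` on coordinate `j` and `w n = ∑ₘ θ ^ |n - m| * β m` elsewhere, `β n` bounding the entries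
of `R n`, the weight absorbs the geometric kernels of `T`, and since `R n j j = 0` the `j`-th row only
meets `β n * w n`, whose sum is `O(∑ β n ^ 2)`; after a shift of time this makes `T ∘ R` a
contraction. Its fixed point has `z n j → 1` and `z n k = O(w n) → 0`, and running the invertible
recursion backwards down to `n = 1` gives `y`.
-/

open Filter Topology Finset
open scoped Matrix BoundedContinuousFunction

noncomputable section

lemma exists_le_of_summable_sq {b : ℕ → ℝ} (hb : Summable fun m => b m ^ 2) :
    ∃ B, ∀ m, b m ≤ B :=
  ⟨1 + ∑' m, b m ^ 2, fun m => by
    nlinarith [hb.le_tsum m fun k _ => sq_nonneg (b k), sq_nonneg (b m - 1)]⟩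

section GeomConv

variable {θ : ℝ}

def geomConv (θ : ℝ) (a : ℕ → ℝ) (n : ℕ) : ℝ := ∑' m, θ ^ n.dist m * a m

lemma summable_pow_dist (h0 : 0 ≤ θ) (h1 : θ < 1) (n : ℕ) :
    Summable fun m => θ ^ n.dist m :=
  (summable_nat_add_iff n).1 <| by
    simpa [Nat.dist_eq_sub_of_le (Nat.le_add_left n _)] using summable_geometric_of_lt_one h0 h1

lemma tsum_pow_dist_le (h0 : 0 ≤ θ) (h1 : θ < 1) (n : ℕ) :
    ∑' m, θ ^ n.dist m ≤ 2 / (1 - θ) := by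
  have hgeom : ∑' i, θ ^ i = (1 - θ)⁻¹ := tsum_geometric_of_lt_one h0 h1
  have hpast : ∑ m ∈ range n, θ ^ n.dist m ≤ (1 - θ)⁻¹ := by
    rw [← sum_range_reflect, ← hgeom]
    refine (sum_le_sum fun i hi => ?_).trans
      ((summable_geometric_of_lt_one h0 h1).sum_le_tsum _ fun i _ => by positivity)
    rw [mem_range] at hi
    exact pow_le_pow_of_le_one h0 h1.le (by rw [Nat.dist_eq_sub_of_le_right (by omega)]; omega)
  have hfuture : ∑' i, θ ^ n.dist (i + n) = (1 - θ)⁻¹ := by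
    simpa [Nat.dist_eq_sub_of_le (Nat.le_add_left n _)] using hgeom
  rw [← (summable_pow_dist h0 h1 n).sum_add_tsum_nat_add n, hfuture]
  linarith [show 2 / (1 - θ) = 2 * (1 - θ)⁻¹ by ring]

lemma summable_pow_dist_mul (h0 : 0 ≤ θ) (h1 : θ < 1) {a : ℕ → ℝ} {B : ℝ}
    (ha0 : ∀ m, 0 ≤ a m) (haB : ∀ m, a m ≤ B) (n : ℕ) :
    Summable fun m => θ ^ n.dist m * a m :=
  ((summable_pow_dist h0 h1 n).mul_right B).of_nonneg_of_le (fun m => by positivity [ha0 m])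
    fun m => mul_le_mul_of_nonneg_left (haB m) (by positivity)

lemma geomConv_nonneg (h0 : 0 ≤ θ) {a : ℕ → ℝ} (ha0 : ∀ m, 0 ≤ a m) (n : ℕ) :
    0 ≤ geomConv θ a n :=
  tsum_nonneg fun m => mul_nonneg (pow_nonneg h0 _) (ha0 m)

lemma le_geomConv (h0 : 0 ≤ θ) (h1 : θ < 1) {a : ℕ → ℝ} {B : ℝ}
    (ha0 : ∀ m, 0 ≤ a m) (haB : ∀ m, a m ≤ B) (n : ℕ) :
    a n ≤ geomConv θ a n := by
  simpa [geomConv] using (summable_pow_dist_mul h0 h1 ha0 haB n).le_tsum n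
    fun m _ => mul_nonneg (pow_nonneg h0 _) (ha0 m)

lemma geomConv_le (h0 : 0 ≤ θ) (h1 : θ < 1) {a : ℕ → ℝ} {B : ℝ}
    (ha0 : ∀ m, 0 ≤ a m) (haB : ∀ m, a m ≤ B) (n : ℕ) :
    geomConv θ a n ≤ 2 / (1 - θ) * B := by
  have hB : 0 ≤ B := (ha0 0).trans (haB 0)
  calc geomConv θ a n ≤ ∑' m, θ ^ n.dist m * B :=
        (summable_pow_dist_mul h0 h1 ha0 haB n).tsum_le_tsum
          (fun m => mul_le_mul_of_nonneg_left (haB m) (by positivity))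
          ((summable_pow_dist h0 h1 n).mul_right B)
    _ ≤ 2 / (1 - θ) * B := by
        rw [tsum_mul_right]; exact mul_le_mul_of_nonneg_right (tsum_pow_dist_le h0 h1 n) hB

lemma sum_range_pow_mul_le_geomConv (h0 : 0 < θ) (h1 : θ < 1) {a : ℕ → ℝ} {B : ℝ}
    (ha0 : ∀ m, 0 ≤ a m) (haB : ∀ m, a m ≤ B) (n : ℕ) :
    ∑ m ∈ range n, θ ^ (n - 1 - m) * a m ≤ θ⁻¹ * geomConv θ a n := by
  have hpow : ∀ m ∈ range n, θ ^ (n - 1 - m) * a m = θ⁻¹ * (θ ^ n.dist m * a m) := by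
    intro m hm
    rw [mem_range] at hm
    rw [Nat.dist_eq_sub_of_le_right hm.le, show n - m = n - 1 - m + 1 by omega, pow_succ]
    field_simp
  rw [sum_congr rfl hpow, ← mul_sum]
  exact mul_le_mul_of_nonneg_left ((summable_pow_dist_mul h0.le h1 ha0 haB n).sum_le_tsum _
    fun m _ => mul_nonneg (pow_nonneg h0.le _) (ha0 m)) (inv_nonneg.2 h0.le)

lemma summable_pow_mul_add (h0 : 0 ≤ θ) (h1 : θ < 1) {a : ℕ → ℝ} {B : ℝ}
    (ha0 : ∀ m, 0 ≤ a m) (haB : ∀ m, a m ≤ B) (n : ℕ) :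
    Summable fun i => θ ^ i * a (i + n) :=
  ((summable_geometric_of_lt_one h0 h1).mul_right B).of_nonneg_of_le
    (fun _ => mul_nonneg (pow_nonneg h0 _) (ha0 _))
    fun _ => mul_le_mul_of_nonneg_left (haB _) (pow_nonneg h0 _)

lemma tsum_pow_mul_add_le_geomConv (h0 : 0 ≤ θ) (h1 : θ < 1) {a : ℕ → ℝ} {B : ℝ}
    (ha0 : ∀ m, 0 ≤ a m) (haB : ∀ m, a m ≤ B) (n : ℕ) :
    ∑' i, θ ^ i * a (i + n) ≤ geomConv θ a n := by
  have hdist : ∀ i, n.dist (i + n) = i := fun i => by simp [Nat.dist]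
  exact Summable.tsum_le_tsum_of_inj (· + n) (add_left_injective n)
    (fun m _ => mul_nonneg (pow_nonneg h0 _) (ha0 m)) (fun i => by rw [hdist])
    (summable_pow_mul_add h0 h1 ha0 haB n) (summable_pow_dist_mul h0 h1 ha0 haB n)

lemma summable_uncurry_pow_dist_mul (h0 : 0 ≤ θ) (h1 : θ < 1) {a : ℕ → ℝ}
    (ha0 : ∀ m, 0 ≤ a m) (ha : Summable a) :
    Summable (Function.uncurry fun m n : ℕ => θ ^ n.dist m * a m) := by
  refine (summable_prod_of_nonneg fun p => mul_nonneg (pow_nonneg h0 _) (ha0 _)).2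
    ⟨fun m => ?_, (ha.mul_left (2 / (1 - θ))).of_nonneg_of_le
      (fun m => tsum_nonneg fun n => mul_nonneg (pow_nonneg h0 _) (ha0 m)) fun m => ?_⟩
  · simpa only [Nat.dist_comm] using (summable_pow_dist h0 h1 m).mul_right (a m)
  · simp only [tsum_mul_right, Nat.dist_comm _ m]
    exact mul_le_mul_of_nonneg_right (tsum_pow_dist_le h0 h1 m) (ha0 m)

lemma summable_geomConv (h0 : 0 ≤ θ) (h1 : θ < 1) {a : ℕ → ℝ}
    (ha0 : ∀ m, 0 ≤ a m) (ha : Summable a) : Summable (geomConv θ a) :=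
  (summable_uncurry_pow_dist_mul h0 h1 ha0 ha).prod_symm.prod

lemma tsum_geomConv_le (h0 : 0 ≤ θ) (h1 : θ < 1) {a : ℕ → ℝ}
    (ha0 : ∀ m, 0 ≤ a m) (ha : Summable a) :
    ∑' n, geomConv θ a n ≤ 2 / (1 - θ) * ∑' m, a m := by
  unfold geomConv
  rw [(summable_uncurry_pow_dist_mul h0 h1 ha0 ha).tsum_comm, ← tsum_mul_left]
  refine Summable.tsum_le_tsum (fun m => ?_) ?_ (ha.mul_left _)
  · simp only [Nat.dist_comm _ m, mul_comm _ (a m), tsum_mul_left]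
    exact mul_le_mul_of_nonneg_left (tsum_pow_dist_le h0 h1 m) (ha0 m)
  · exact (summable_uncurry_pow_dist_mul h0 h1 ha0 ha).prod

lemma mul_geomConv_le (h0 : 0 ≤ θ) (h1 : θ < 1) {b : ℕ → ℝ} {B : ℝ}
    (hb0 : ∀ m, 0 ≤ b m) (hbB : ∀ m, b m ≤ B) (n : ℕ) :
    b n * geomConv θ b n ≤ b n ^ 2 / (1 - θ) + geomConv θ (fun m => b m ^ 2) n / 2 := by
  have hsq : ∀ m, b m ^ 2 ≤ B ^ 2 := fun m => pow_le_pow_left₀ (hb0 m) (hbB m) 2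
  have hpow := summable_pow_dist h0 h1 n
  have hsq' := summable_pow_dist_mul h0 h1 (fun m => sq_nonneg (b m)) hsq n
  calc b n * geomConv θ b n = ∑' m, θ ^ n.dist m * (b n * b m) := by
        rw [geomConv, ← tsum_mul_left]; congr 1; ext m; ring
    _ ≤ ∑' m, (b n ^ 2 / 2 * θ ^ n.dist m + θ ^ n.dist m * b m ^ 2 / 2) := by
        refine Summable.tsum_le_tsum (fun m => ?_) ?_ ((hpow.mul_left _).add (hsq'.div_const 2))
        · nlinarith [pow_nonneg h0 (n.dist m), sq_nonneg (b n - b m)]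
        · exact (summable_pow_dist_mul h0 h1 hb0 hbB n).mul_left (b n) |>.congr fun m => by ring
    _ = b n ^ 2 / 2 * ∑' m, θ ^ n.dist m + geomConv θ (fun m => b m ^ 2) n / 2 := by
        rw [(hpow.mul_left _).tsum_add (hsq'.div_const 2), tsum_mul_left, tsum_div_const]; rfl
    _ ≤ b n ^ 2 / 2 * (2 / (1 - θ)) + geomConv θ (fun m => b m ^ 2) n / 2 := by
        gcongr; exact tsum_pow_dist_le h0 h1 n
    _ = b n ^ 2 / (1 - θ) + geomConv θ (fun m => b m ^ 2) n / 2 := by ring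

lemma summable_mul_geomConv (h0 : 0 ≤ θ) (h1 : θ < 1) {b : ℕ → ℝ}
    (hb0 : ∀ m, 0 ≤ b m) (hb : Summable fun m => b m ^ 2) :
    Summable fun n => b n * geomConv θ b n := by
  obtain ⟨B, hbB⟩ := exists_le_of_summable_sq hb
  exact ((hb.div_const _).add ((summable_geomConv h0 h1 (fun m => sq_nonneg (b m)) hb).div_const 2))
    |>.of_nonneg_of_le (fun n => mul_nonneg (hb0 n) (geomConv_nonneg h0 hb0 n))
      (mul_geomConv_le h0 h1 hb0 hbB)

lemma tsum_mul_geomConv_le (h0 : 0 ≤ θ) (h1 : θ < 1) {b : ℕ → ℝ}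
    (hb0 : ∀ m, 0 ≤ b m) (hb : Summable fun m => b m ^ 2) :
    ∑' n, b n * geomConv θ b n ≤ 2 / (1 - θ) * ∑' n, b n ^ 2 := by
  obtain ⟨B, hbB⟩ := exists_le_of_summable_sq hb
  have hconv := summable_geomConv h0 h1 (fun m => sq_nonneg (b m)) hb
  calc ∑' n, b n * geomConv θ b n
      ≤ ∑' n, (b n ^ 2 / (1 - θ) + geomConv θ (fun m => b m ^ 2) n / 2) :=
        (summable_mul_geomConv h0 h1 hb0 hb).tsum_le_tsum (mul_geomConv_le h0 h1 hb0 hbB)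
          ((hb.div_const _).add (hconv.div_const 2))
    _ = (∑' n, b n ^ 2) / (1 - θ) + (∑' n, geomConv θ (fun m => b m ^ 2) n) / 2 := by
        rw [(hb.div_const _).tsum_add (hconv.div_const 2), tsum_div_const, tsum_div_const]
    _ ≤ (∑' n, b n ^ 2) / (1 - θ) + 2 / (1 - θ) * (∑' n, b n ^ 2) / 2 := by
        gcongr; exact tsum_geomConv_le h0 h1 (fun m => sq_nonneg (b m)) hb
    _ = 2 / (1 - θ) * ∑' n, b n ^ 2 := by ring

lemma geomConv_le_add_div (h0 : 0 ≤ θ) (h1 : θ < 1) {b : ℕ → ℝ} {B : ℝ}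
    (hb0 : ∀ m, 0 ≤ b m) (hbB : ∀ m, b m ≤ B) {ε : ℝ} (hε : 0 < ε) (n : ℕ) :
    geomConv θ b n ≤ 2 / (1 - θ) * ε + geomConv θ (fun m => b m ^ 2) n / ε := by
  have hsq : ∀ m, b m ^ 2 ≤ B ^ 2 := fun m => pow_le_pow_left₀ (hb0 m) (hbB m) 2
  have hterm : ∀ m, b m ≤ ε + b m ^ 2 / ε := fun m => by
    have : (b m - ε) * ε ≤ b m ^ 2 := by nlinarith [sq_nonneg (b m - ε), hb0 m]
    linarith [(le_div_iff₀ hε).2 this]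
  have hpow := summable_pow_dist h0 h1 n
  have hsq' := summable_pow_dist_mul h0 h1 (fun m => sq_nonneg (b m)) hsq n
  calc geomConv θ b n ≤ ∑' m, (ε * θ ^ n.dist m + θ ^ n.dist m * b m ^ 2 / ε) :=
        (summable_pow_dist_mul h0 h1 hb0 hbB n).tsum_le_tsum (fun m => by
          rw [mul_comm ε, mul_div_assoc, ← mul_add]
          exact mul_le_mul_of_nonneg_left (hterm m) (pow_nonneg h0 _))
          ((hpow.mul_left ε).add (hsq'.div_const ε))
    _ = ε * ∑' m, θ ^ n.dist m + geomConv θ (fun m => b m ^ 2) n / ε := by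
        rw [(hpow.mul_left ε).tsum_add (hsq'.div_const ε), tsum_mul_left, tsum_div_const]; rfl
    _ ≤ ε * (2 / (1 - θ)) + geomConv θ (fun m => b m ^ 2) n / ε := by
        gcongr; exact tsum_pow_dist_le h0 h1 n
    _ = 2 / (1 - θ) * ε + geomConv θ (fun m => b m ^ 2) n / ε := by ring

lemma tendsto_geomConv_zero (h0 : 0 ≤ θ) (h1 : θ < 1) {b : ℕ → ℝ}
    (hb0 : ∀ m, 0 ≤ b m) (hb : Summable fun m => b m ^ 2) :
    Tendsto (geomConv θ b) atTop (𝓝 0) := by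
  obtain ⟨B, hbB⟩ := exists_le_of_summable_sq hb
  have h1θ : 0 < 1 - θ := by linarith
  rw [Metric.tendsto_atTop]
  intro η hη
  set ε := η * (1 - θ) / 4 with hε_def
  have hε : 0 < ε := by positivity
  have hconv := (summable_geomConv h0 h1 (fun m => sq_nonneg (b m)) hb).tendsto_atTop_zero
  obtain ⟨N, hN⟩ := eventually_atTop.1 <| hconv.eventually <|
    gt_mem_nhds (show 0 < ε * (η / 2) by positivity)
  refine ⟨N, fun n hn => ?_⟩
  rw [Real.dist_eq, sub_zero, abs_of_nonneg (geomConv_nonneg h0 hb0 n)]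
  have hv : geomConv θ (fun m => b m ^ 2) n / ε < η / 2 := by
    rw [div_lt_iff₀ hε]; linarith [hN n hn]
  have he : 2 / (1 - θ) * ε = η / 2 := by rw [hε_def]; field_simp; ring
  linarith [geomConv_le_add_div h0 h1 hb0 hbB hε n]

end GeomConv

section GreenSums

variable {𝕜 : Type*}

def forwardSum [CommRing 𝕜] (a f : ℕ → 𝕜) (n : ℕ) : 𝕜 :=
  ∑ m ∈ range n, (∏ r ∈ Ico (m + 1) n, a r) * f m

lemma forwardSum_succ [CommRing 𝕜] (a f : ℕ → 𝕜) (n : ℕ) :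
    forwardSum a f (n + 1) = a n * forwardSum a f n + f n := by
  rw [forwardSum, sum_range_succ, Ico_self, prod_empty, one_mul, forwardSum, mul_sum]
  congr 1
  refine sum_congr rfl fun m hm => ?_
  rw [prod_Ico_succ_top (by rw [mem_range] at hm; omega)]
  ring

lemma forwardSum_sub [CommRing 𝕜] (a f g : ℕ → 𝕜) (n : ℕ) :
    forwardSum a (f - g) n = forwardSum a f n - forwardSum a g n := by
  simp only [forwardSum, Pi.sub_apply, mul_sub, sum_sub_distrib]

lemma norm_forwardSum_le [NormedField 𝕜] {a : ℕ → 𝕜} {ρ : ℝ} (ha : ∀ r, ‖a r‖ ≤ ρ)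
    (f : ℕ → 𝕜) (n : ℕ) :
    ‖forwardSum a f n‖ ≤ ∑ m ∈ range n, ρ ^ (n - 1 - m) * ‖f m‖ := by
  refine (norm_sum_le _ _).trans (sum_le_sum fun m _ => ?_)
  rw [norm_mul, norm_prod]
  gcongr
  calc ∏ r ∈ Ico (m + 1) n, ‖a r‖ ≤ ∏ r ∈ Ico (m + 1) n, ρ :=
        prod_le_prod (fun _ _ => norm_nonneg _) fun r _ => ha r
    _ = ρ ^ (n - 1 - m) := by rw [prod_const, Nat.card_Ico]; congr 1; omega

-- `backwardSum a f n = -∑_{m ≥ n} (a n * ⋯ * a m)⁻¹ * f m`, indexed by `i = m - n`.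
def backwardTerm [NormedField 𝕜] (a f : ℕ → 𝕜) (n i : ℕ) : 𝕜 :=
  (∏ r ∈ range (i + 1), (a (r + n))⁻¹) * f (i + n)

def backwardSum [NormedField 𝕜] (a f : ℕ → 𝕜) (n : ℕ) : 𝕜 :=
  -∑' i, backwardTerm a f n i

variable [NormedField 𝕜] {a : ℕ → 𝕜}

lemma mul_backwardTerm_succ {n : ℕ} (ha : a n ≠ 0) (f : ℕ → 𝕜) (i : ℕ) :
    a n * backwardTerm a f n (i + 1) = backwardTerm a f (n + 1) i := by
  have hshift : ∀ r, r + (n + 1) = r + 1 + n := fun r => by ring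
  rw [backwardTerm, backwardTerm, prod_range_succ', zero_add]
  simp only [hshift]
  field_simp

lemma backwardSum_succ {n : ℕ} {f : ℕ → 𝕜} (ha : a n ≠ 0) (hs : Summable (backwardTerm a f n)) :
    backwardSum a f (n + 1) = a n * backwardSum a f n + f n := by
  have h0 : a n * backwardTerm a f n 0 = f n := by simp [backwardTerm, ha]
  rw [backwardSum, backwardSum, mul_neg, ← hs.tsum_mul_left, (hs.mul_left (a n)).tsum_eq_zero_add,
    h0]
  simp only [mul_backwardTerm_succ ha]
  ring

lemma backwardSum_sub {f g : ℕ → 𝕜} {n : ℕ} (hf : Summable (backwardTerm a f n))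
    (hg : Summable (backwardTerm a g n)) :
    backwardSum a (f - g) n = backwardSum a f n - backwardSum a g n := by
  rw [backwardSum, backwardSum, backwardSum, ← neg_sub', ← hf.tsum_sub hg]
  simp only [backwardTerm, Pi.sub_apply, mul_sub]

lemma norm_backwardTerm_le {ρ : ℝ} (ha : ∀ r, ‖(a r)⁻¹‖ ≤ ρ) (f : ℕ → 𝕜) (n i : ℕ) :
    ‖backwardTerm a f n i‖ ≤ ρ ^ (i + 1) * ‖f (i + n)‖ := by
  rw [backwardTerm, norm_mul, norm_prod]
  gcongr
  calc ∏ r ∈ range (i + 1), ‖(a (r + n))⁻¹‖ ≤ ∏ r ∈ range (i + 1), ρ :=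
        prod_le_prod (fun _ _ => norm_nonneg _) fun r _ => ha _
    _ = ρ ^ (i + 1) := by rw [prod_const, card_range]

lemma summable_backwardTerm_of_le [CompleteSpace 𝕜] {ρ : ℝ} (ha : ∀ r, ‖(a r)⁻¹‖ ≤ ρ)
    {f : ℕ → 𝕜} {n : ℕ} {g : ℕ → ℝ} (hfg : ∀ i, ρ ^ (i + 1) * ‖f (i + n)‖ ≤ g i) (hg : Summable g) :
    Summable (backwardTerm a f n) :=
  hg.of_norm_bounded fun i => (norm_backwardTerm_le ha f n i).trans (hfg i)

lemma norm_backwardSum_le {ρ : ℝ} (ha : ∀ r, ‖(a r)⁻¹‖ ≤ ρ) {f : ℕ → 𝕜} {n : ℕ}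
    {g : ℕ → ℝ} (hfg : ∀ i, ρ ^ (i + 1) * ‖f (i + n)‖ ≤ g i) (hg : Summable g) :
    ‖backwardSum a f n‖ ≤ ∑' i, g i := by
  rw [backwardSum, norm_neg]
  exact tsum_of_norm_bounded hg.hasSum fun i => (norm_backwardTerm_le ha f n i).trans (hfg i)

end GreenSums

lemma exists_solution_eq_of_ge {ι R : Type*} [Fintype ι] [DecidableEq ι] [CommRing R]
    (M : ℕ → Matrix ι ι R) {a N : ℕ} (hM : ∀ n, a ≤ n → n < N → IsUnit (M n))
    {y : ℕ → ι → R} (hy : ∀ n, N ≤ n → y (n + 1) = M n *ᵥ y n) :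
    ∃ y' : ℕ → ι → R, (∀ n, a ≤ n → y' (n + 1) = M n *ᵥ y' n) ∧ ∀ n, N ≤ n → y' n = y n := by
  induction N generalizing y with
  | zero => exact ⟨y, fun n _ => hy n n.zero_le, fun _ _ => rfl⟩
  | succ N ih =>
    by_cases haN : a ≤ N
    · set y₁ := Function.update y N ((M N)⁻¹ *ᵥ y (N + 1)) with hy₁
      have hy₁y : ∀ n, n ≠ N → y₁ n = y n := fun n hn => Function.update_of_ne hn _ _
      have hy₁rec : ∀ n, N ≤ n → y₁ (n + 1) = M n *ᵥ y₁ n := by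
        intro n hn
        rcases hn.eq_or_lt with rfl | hlt
        · have hdet := (Matrix.isUnit_iff_isUnit_det _).1 (hM N haN N.lt_succ_self)
          rw [hy₁y _ N.succ_ne_self, hy₁, Function.update_self, Matrix.mulVec_mulVec,
            Matrix.mul_nonsing_inv _ hdet, Matrix.one_mulVec]
        · rw [hy₁y _ (by omega), hy₁y _ hlt.ne', hy n hlt]
      obtain ⟨y', hy', hy'y⟩ := ih (fun n han hnN => hM n han (by omega)) hy₁rec
      exact ⟨y', hy', fun n hn => by rw [hy'y n (by omega), hy₁y n (by omega)]⟩
    · exact ⟨y, fun n han => hy n (by omega), fun _ _ => rfl⟩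

lemma exists_pos_lt_one_forall_lt_or_inv_lt {κ : Type*} {s : Finset κ} {a : κ → ℝ}
    (ha : ∀ k ∈ s, a k ≠ 1) : ∃ θ, 0 < θ ∧ θ < 1 ∧ ∀ k ∈ s, a k < θ ∨ (a k)⁻¹ < θ := by
  have hev : ∀ᶠ θ in 𝓝 (1 : ℝ), ∀ k ∈ s, a k < θ ∨ (a k)⁻¹ < θ := by
    refine (eventually_all_finset s).2 fun k hk => ?_
    rcases (ha k hk).lt_or_gt with hlt | hgt
    · exact (eventually_gt_nhds hlt).mono fun _ => Or.inl
    · exact (eventually_gt_nhds (inv_lt_one_of_one_lt₀ hgt)).mono fun _ => Or.inr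
  have hIoo : ∀ᶠ θ in 𝓝[<] (1 : ℝ), θ ∈ Set.Ioo 0 1 := Ioo_mem_nhdsLT zero_lt_one
  obtain ⟨θ, ⟨hθ0, hθ1⟩, hθ⟩ := (hIoo.and (nhdsWithin_le_nhds hev)).exists
  exact ⟨θ, hθ0, hθ1, hθ⟩

lemma norm_mulVec_apply_le {ι 𝕜 : Type*} [Fintype ι] [NormedRing 𝕜] (M : Matrix ι ι 𝕜)
    (x : ι → 𝕜) (k : ι) : ‖(M *ᵥ x) k‖ ≤ ∑ i, ‖M k i‖ * ‖x i‖ :=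
  (norm_sum_le _ _).trans (sum_le_sum fun _ _ => norm_mul_le _ _)

section Levinson

variable {ι 𝕜 : Type*} [RCLike 𝕜]

def levinsonSum [DecidableEq ι] (S : Finset ι) (μ f : ℕ → ι → 𝕜) (n : ℕ) (k : ι) : 𝕜 :=
  if k ∈ S then forwardSum (μ · k) (f · k) n else backwardSum (μ · k) (f · k) n

lemma levinsonSum_succ [DecidableEq ι] {S : Finset ι} {μ f : ℕ → ι → 𝕜} {n : ℕ} {k : ι}
    (hk : k ∉ S → μ n k ≠ 0 ∧ Summable (backwardTerm (μ · k) (f · k) n)) :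
    levinsonSum S μ f (n + 1) k = μ n k * levinsonSum S μ f n k + f n k := by
  unfold levinsonSum
  split_ifs with hkS
  · exact forwardSum_succ _ _ n
  · exact backwardSum_succ (hk hkS).1 (hk hkS).2

lemma levinsonSum_sub [DecidableEq ι] {S : Finset ι} {μ f g : ℕ → ι → 𝕜} {n : ℕ} {k : ι}
    (hf : k ∉ S → Summable (backwardTerm (μ · k) (f · k) n))
    (hg : k ∉ S → Summable (backwardTerm (μ · k) (g · k) n)) :
    levinsonSum S μ (f - g) n k = levinsonSum S μ f n k - levinsonSum S μ g n k := by
  unfold levinsonSum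
  split_ifs with hkS
  · exact forwardSum_sub _ _ _ n
  · exact backwardSum_sub (hf hkS) (hg hkS)

structure IsDichotomy (θ : ℝ) (j : ι) (S : Finset ι) (d : ι → 𝕜) : Prop where
  apply_self : d j = 1
  norm_le : ∀ k ∈ S, ‖d k‖ ≤ θ
  norm_inv_le : ∀ k ∉ S, k ≠ j → d k ≠ 0 ∧ ‖(d k)⁻¹‖ ≤ θ

lemma eq_diagonal_add_mulVec_of_eq_levinsonSum [Fintype ι] [DecidableEq ι] {θ : ℝ} {j : ι}
    {S : Finset ι} {μ : ℕ → ι → 𝕜} {R : ℕ → Matrix ι ι 𝕜} {z : ℕ → ι → 𝕜} {n : ℕ}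
    (hμ : IsDichotomy θ j S (μ n))
    (hs : ∀ k ∉ S, Summable (backwardTerm (μ · k) (fun m => (R m *ᵥ z m) k) n))
    (hz : ∀ m, z m = Pi.single j 1 + levinsonSum S μ (fun m => R m *ᵥ z m) m) :
    z (n + 1) = (Matrix.diagonal (μ n) + R n) *ᵥ z n := by
  ext k
  have hsingle : (Pi.single j 1 : ι → 𝕜) k = μ n k * (Pi.single j 1 : ι → 𝕜) k := by
    by_cases hkj : k = j
    · subst hkj; simp [hμ.apply_self]
    · simp [hkj]
  rw [hz (n + 1), Pi.add_apply, levinsonSum_succ fun hkS => ⟨?_, hs k hkS⟩, Matrix.add_mulVec,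
    Pi.add_apply, Matrix.mulVec_diagonal, congrFun (hz n) k, Pi.add_apply]
  · linear_combination hsingle
  · by_cases hkj : k = j
    · subst hkj; simp [hμ.apply_self]
    · exact (hμ.norm_inv_le k hkS hkj).1

-- The factor `2 / θ` makes the rows `k ≠ j` of `levinsonMap` contract by `3 / 4`.
def levinsonWeight [DecidableEq ι] (θ : ℝ) (β : ℕ → ℝ) (j : ι) (n : ℕ) (k : ι) : ℝ :=
  if k = j then 1 else 2 / θ * geomConv θ β n

def weighted [Fintype ι] [DecidableEq ι] (θ : ℝ) (β : ℕ → ℝ) (j : ι) (g : ℕ →ᵇ (ι → 𝕜)) (n : ℕ)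
    (i : ι) : 𝕜 :=
  (levinsonWeight θ β j n i : 𝕜) * g n i

lemma weighted_sub [Fintype ι] [DecidableEq ι] {θ : ℝ} {β : ℕ → ℝ} {j : ι} (g g' : ℕ →ᵇ (ι → 𝕜)) :
    weighted θ β j (g - g') = weighted θ β j g - weighted θ β j g' := by
  ext n i
  simp [weighted, mul_sub]

/-- The last two fields are the smallness that makes `levinsonMap` a `3 / 4`-contraction; it is
reached by shifting time, see `exists_solution_of_tendsto`. -/
structure SmallPerturbation [Fintype ι] (θ : ℝ) (j : ι) (S : Finset ι) (μ : ℕ → ι → 𝕜)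
    (R : ℕ → Matrix ι ι 𝕜) (β : ℕ → ℝ) : Prop where
  pos : 0 < θ
  lt_one : θ < 1
  dichotomy : ∀ n, IsDichotomy θ j S (μ n)
  β_pos : ∀ n, 0 < β n
  summable_sq : Summable fun n => β n ^ 2
  norm_le : ∀ n k i, ‖R n k i‖ ≤ β n
  apply_self_self : ∀ n, R n j j = 0
  card_mul_weight_le : ∀ n, Fintype.card ι * (2 / θ * geomConv θ β n) ≤ 1 / 2
  card_mul_tsum_le : Fintype.card ι * (2 / θ * ∑' n, β n * geomConv θ β n) ≤ 1 / 2

namespace SmallPerturbation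

variable [Fintype ι] {θ : ℝ} {j : ι} {S : Finset ι} {μ : ℕ → ι → 𝕜} {R : ℕ → Matrix ι ι 𝕜}
  {β : ℕ → ℝ} (h : SmallPerturbation θ j S μ R β)
include h

lemma β_nonneg (n : ℕ) : 0 ≤ β n := (h.β_pos n).le

lemma exists_le : ∃ B, ∀ n, β n ≤ B := exists_le_of_summable_sq h.summable_sq

lemma not_mem : j ∉ S := fun hj => by
  have := (h.dichotomy 0).norm_le j hj
  rw [(h.dichotomy 0).apply_self, norm_one] at this
  exact absurd this (not_le.2 h.lt_one)

lemma geomConv_pos (n : ℕ) : 0 < geomConv θ β n := by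
  obtain ⟨B, hB⟩ := h.exists_le
  exact (h.β_pos n).trans_le (le_geomConv h.pos.le h.lt_one h.β_nonneg hB n)

lemma summable_tail (n : ℕ) : Summable fun i => β (i + n) * geomConv θ β (i + n) :=
  (summable_nat_add_iff n).2 (summable_mul_geomConv h.pos.le h.lt_one h.β_nonneg h.summable_sq)

lemma tsum_tail_le (n : ℕ) :
    ∑' i, β (i + n) * geomConv θ β (i + n) ≤ ∑' m, β m * geomConv θ β m :=
  Summable.tsum_le_tsum_of_inj (· + n) (add_left_injective n)
    (fun m _ => mul_nonneg (h.β_nonneg m) (h.geomConv_pos m).le) (fun _ => le_rfl)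
    (h.summable_tail n) (summable_mul_geomConv h.pos.le h.lt_one h.β_nonneg h.summable_sq)

variable [DecidableEq ι]

lemma weight_pos (n : ℕ) (k : ι) : 0 < levinsonWeight θ β j n k := by
  unfold levinsonWeight
  split_ifs
  · exact one_pos
  · exact mul_pos (div_pos two_pos h.pos) (h.geomConv_pos n)

lemma sum_weight_le (n : ℕ) : ∑ i, levinsonWeight θ β j n i ≤ 3 / 2 := by
  have hw := h.geomConv_pos n
  calc ∑ i, levinsonWeight θ β j n i
      ≤ ∑ i, ((if i = j then 1 else 0) + 2 / θ * geomConv θ β n) := by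
        refine sum_le_sum fun i _ => ?_
        unfold levinsonWeight
        split_ifs
        · linarith [mul_pos (div_pos two_pos h.pos) hw]
        · simp
    _ ≤ 3 / 2 := by
        rw [sum_add_distrib, sum_ite_eq' univ j, if_pos (mem_univ j), sum_const, card_univ,
          nsmul_eq_mul]
        linarith [h.card_mul_weight_le n]

variable {z : ℕ → ι → 𝕜} {M : ℝ}

lemma norm_mulVec_le (hz : ∀ m i, ‖z m i‖ ≤ M * levinsonWeight θ β j m i) (hM : 0 ≤ M)
    (m : ℕ) (k : ι) : ‖(R m *ᵥ z m) k‖ ≤ 3 / 2 * M * β m := by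
  calc ‖(R m *ᵥ z m) k‖ ≤ ∑ i, ‖R m k i‖ * ‖z m i‖ := norm_mulVec_apply_le _ _ _
    _ ≤ ∑ i, β m * M * levinsonWeight θ β j m i := sum_le_sum fun i _ => by
        rw [mul_assoc]
        exact mul_le_mul (h.norm_le m k i) (hz m i) (norm_nonneg _) (h.β_nonneg m)
    _ ≤ β m * M * (3 / 2) := by
        rw [← mul_sum]
        exact mul_le_mul_of_nonneg_left (h.sum_weight_le m) (mul_nonneg (h.β_nonneg m) hM)
    _ = 3 / 2 * M * β m := by ring

lemma norm_mulVec_apply_self_le (hz : ∀ m i, ‖z m i‖ ≤ M * levinsonWeight θ β j m i)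
    (hM : 0 ≤ M) (m : ℕ) :
    ‖(R m *ᵥ z m) j‖ ≤ M * (Fintype.card ι * (2 / θ)) * (β m * geomConv θ β m) := by
  have hw := (div_pos two_pos h.pos).le
  calc ‖(R m *ᵥ z m) j‖ ≤ ∑ i, ‖R m j i‖ * ‖z m i‖ := norm_mulVec_apply_le _ _ _
    _ ≤ ∑ _i : ι, β m * (M * (2 / θ * geomConv θ β m)) := sum_le_sum fun i _ => by
        by_cases hij : i = j
        · rw [hij, h.apply_self_self, norm_zero, zero_mul]
          exact mul_nonneg (h.β_nonneg m) (mul_nonneg hM (mul_nonneg hw (h.geomConv_pos m).le))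
        · refine mul_le_mul (h.norm_le m j i) ?_ (norm_nonneg _) (h.β_nonneg m)
          simpa [levinsonWeight, hij] using hz m i
    _ = M * (Fintype.card ι * (2 / θ)) * (β m * geomConv θ β m) := by
        rw [sum_const, card_univ, nsmul_eq_mul]; ring

lemma pow_mul_norm_mulVec_le (hz : ∀ m i, ‖z m i‖ ≤ M * levinsonWeight θ β j m i) (hM : 0 ≤ M)
    (n i : ℕ) (k : ι) :
    θ ^ (i + 1) * ‖(R (i + n) *ᵥ z (i + n)) k‖ ≤ 3 / 2 * M * θ * (θ ^ i * β (i + n)) :=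
  calc θ ^ (i + 1) * ‖(R (i + n) *ᵥ z (i + n)) k‖ ≤ θ ^ (i + 1) * (3 / 2 * M * β (i + n)) :=
        mul_le_mul_of_nonneg_left (h.norm_mulVec_le hz hM _ k) (pow_nonneg h.pos.le _)
    _ = 3 / 2 * M * θ * (θ ^ i * β (i + n)) := by ring

lemma summable_backwardTerm (hz : ∀ m i, ‖z m i‖ ≤ M * levinsonWeight θ β j m i) (hM : 0 ≤ M)
    (n : ℕ) {k : ι} (hk : k ∉ S) :
    Summable (backwardTerm (μ · k) (fun m => (R m *ᵥ z m) k) n) := by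
  obtain ⟨B, hB⟩ := h.exists_le
  by_cases hkj : k = j
  · subst hkj
    refine summable_backwardTerm_of_le (ρ := 1) (fun r => by simp [(h.dichotomy r).apply_self])
      (fun i => ?_) ((h.summable_tail n).mul_left (M * (Fintype.card ι * (2 / θ))))
    rw [one_pow, one_mul]
    exact h.norm_mulVec_apply_self_le hz hM (i + n)
  · exact summable_backwardTerm_of_le (fun r => ((h.dichotomy r).norm_inv_le k hk hkj).2)
      (h.pow_mul_norm_mulVec_le hz hM n · k)
      ((summable_pow_mul_add h.pos.le h.lt_one h.β_nonneg hB n).mul_left (3 / 2 * M * θ))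

lemma norm_forwardSum_le (hz : ∀ m i, ‖z m i‖ ≤ M * levinsonWeight θ β j m i) (hM : 0 ≤ M)
    (n : ℕ) {k : ι} (hk : k ∈ S) :
    ‖forwardSum (μ · k) (fun m => (R m *ᵥ z m) k) n‖ ≤ 3 / 4 * M * (2 / θ * geomConv θ β n) := by
  obtain ⟨B, hB⟩ := h.exists_le
  calc _ ≤ ∑ m ∈ range n, θ ^ (n - 1 - m) * ‖(R m *ᵥ z m) k‖ :=
        _root_.norm_forwardSum_le (fun r => (h.dichotomy r).norm_le k hk) _ n
    _ ≤ ∑ m ∈ range n, 3 / 2 * M * (θ ^ (n - 1 - m) * β m) := sum_le_sum fun m _ => by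
        rw [mul_left_comm]
        exact mul_le_mul_of_nonneg_left (h.norm_mulVec_le hz hM m k) (pow_nonneg h.pos.le _)
    _ ≤ 3 / 2 * M * (θ⁻¹ * geomConv θ β n) := by
        rw [← mul_sum]
        exact mul_le_mul_of_nonneg_left
          (sum_range_pow_mul_le_geomConv h.pos h.lt_one h.β_nonneg hB n) (by positivity)
    _ = 3 / 4 * M * (2 / θ * geomConv θ β n) := by ring

lemma norm_backwardSum_self_le (hz : ∀ m i, ‖z m i‖ ≤ M * levinsonWeight θ β j m i)
    (hM : 0 ≤ M) (n : ℕ) :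
    ‖backwardSum (μ · j) (fun m => (R m *ᵥ z m) j) n‖ ≤
      M * (Fintype.card ι * (2 / θ)) * ∑' i, β (i + n) * geomConv θ β (i + n) := by
  rw [← tsum_mul_left]
  exact norm_backwardSum_le (ρ := 1) (fun r => by simp [(h.dichotomy r).apply_self])
    (fun i => by rw [one_pow, one_mul]; exact h.norm_mulVec_apply_self_le hz hM (i + n))
    ((h.summable_tail n).mul_left _)

lemma norm_backwardSum_le (hz : ∀ m i, ‖z m i‖ ≤ M * levinsonWeight θ β j m i) (hM : 0 ≤ M)
    (n : ℕ) {k : ι} (hk : k ∉ S) (hkj : k ≠ j) :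
    ‖backwardSum (μ · k) (fun m => (R m *ᵥ z m) k) n‖ ≤ 3 / 4 * M * (2 / θ * geomConv θ β n) := by
  obtain ⟨B, hB⟩ := h.exists_le
  have hθ := h.pos
  have hw := h.geomConv_pos n
  have hsum := summable_pow_mul_add hθ.le h.lt_one h.β_nonneg hB n
  calc _ ≤ ∑' i, 3 / 2 * M * θ * (θ ^ i * β (i + n)) :=
        _root_.norm_backwardSum_le (fun r => ((h.dichotomy r).norm_inv_le k hk hkj).2)
          (h.pow_mul_norm_mulVec_le hz hM n · k) (hsum.mul_left _)
    _ ≤ 3 / 2 * M * θ * geomConv θ β n := by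
        rw [tsum_mul_left]
        exact mul_le_mul_of_nonneg_left
          (tsum_pow_mul_add_le_geomConv hθ.le h.lt_one h.β_nonneg hB n) (by positivity)
    _ ≤ 3 / 4 * M * (2 / θ * geomConv θ β n) := by
        rw [show 3 / 4 * M * (2 / θ * geomConv θ β n) = 3 / 2 * M * θ⁻¹ * geomConv θ β n by ring]
        gcongr
        exact h.lt_one.le.trans ((one_le_inv₀ hθ).2 h.lt_one.le)

lemma norm_levinsonSum_le (hz : ∀ m i, ‖z m i‖ ≤ M * levinsonWeight θ β j m i) (hM : 0 ≤ M)
    (n : ℕ) (k : ι) :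
    ‖levinsonSum S μ (fun m => R m *ᵥ z m) n k‖ ≤ 3 / 4 * M * levinsonWeight θ β j n k := by
  unfold levinsonSum levinsonWeight
  split_ifs with hkS hkj hkj
  · exact absurd (hkj ▸ hkS) h.not_mem
  · exact h.norm_forwardSum_le hz hM n hkS
  · subst hkj
    have hC : 0 ≤ M * (Fintype.card ι * (2 / θ)) := mul_nonneg hM (by positivity [h.pos])
    calc _ ≤ M * (Fintype.card ι * (2 / θ)) * ∑' i, β (i + n) * geomConv θ β (i + n) :=
          h.norm_backwardSum_self_le hz hM n
      _ ≤ M * (Fintype.card ι * (2 / θ)) * ∑' m, β m * geomConv θ β m :=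
          mul_le_mul_of_nonneg_left (h.tsum_tail_le n) hC
      _ ≤ 3 / 4 * M * 1 := by nlinarith [h.card_mul_tsum_le]
  · exact h.norm_backwardSum_le hz hM n hkS hkj

lemma norm_weighted_le (g : ℕ →ᵇ (ι → 𝕜)) (n : ℕ) (i : ι) :
    ‖weighted θ β j g n i‖ ≤ ‖g‖ * levinsonWeight θ β j n i := by
  rw [weighted, norm_mul, RCLike.norm_ofReal, abs_of_pos (h.weight_pos n i), mul_comm]
  exact mul_le_mul_of_nonneg_right ((norm_le_pi_norm (g n) i).trans (g.norm_coe_le_norm n))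
    (h.weight_pos n i).le

def levinsonMap (g : ℕ →ᵇ (ι → 𝕜)) : ℕ →ᵇ (ι → 𝕜) :=
  BoundedContinuousFunction.ofNormedAddCommGroupDiscrete
    (fun n i => ((Pi.single j 1 : ι → 𝕜) i +
      levinsonSum S μ (fun m => R m *ᵥ weighted θ β j g m) n i) / levinsonWeight θ β j n i)
    (1 + 3 / 4 * ‖g‖) fun n => by
    refine (pi_norm_le_iff_of_nonneg (by positivity)).2 fun i => ?_
    have hw := h.weight_pos n i
    rw [norm_div, RCLike.norm_ofReal, abs_of_pos hw, div_le_iff₀ hw]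
    refine (norm_add_le _ _).trans ?_
    have hsingle : ‖(Pi.single j 1 : ι → 𝕜) i‖ ≤ levinsonWeight θ β j n i := by
      by_cases hij : i = j
      · simp [hij, levinsonWeight]
      · simp [hij, hw.le]
    nlinarith [h.norm_levinsonSum_le (h.norm_weighted_le g) (norm_nonneg g) n i]

lemma levinsonMap_apply (g : ℕ →ᵇ (ι → 𝕜)) (n : ℕ) (i : ι) :
    h.levinsonMap g n i = ((Pi.single j 1 : ι → 𝕜) i +
      levinsonSum S μ (fun m => R m *ᵥ weighted θ β j g m) n i) / levinsonWeight θ β j n i :=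
  rfl

lemma dist_levinsonMap_le (g g' : ℕ →ᵇ (ι → 𝕜)) :
    dist (h.levinsonMap g) (h.levinsonMap g') ≤ 3 / 4 * dist g g' := by
  rw [BoundedContinuousFunction.dist_le (by positivity)]
  intro n
  rw [dist_eq_norm, pi_norm_le_iff_of_nonneg (by positivity)]
  intro i
  have hw := h.weight_pos n i
  have hsub : levinsonSum S μ (fun m => R m *ᵥ weighted θ β j g m) n i -
      levinsonSum S μ (fun m => R m *ᵥ weighted θ β j g' m) n i =
      levinsonSum S μ (fun m => R m *ᵥ weighted θ β j (g - g') m) n i := by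
    rw [← levinsonSum_sub (h.summable_backwardTerm (h.norm_weighted_le g) (norm_nonneg _) n)
      (h.summable_backwardTerm (h.norm_weighted_le g') (norm_nonneg _) n), weighted_sub]
    congr 1
    ext m k
    simp [Matrix.mulVec_sub]
  rw [Pi.sub_apply, levinsonMap_apply, levinsonMap_apply, ← sub_div, add_sub_add_left_eq_sub, hsub,
    norm_div, RCLike.norm_ofReal, abs_of_pos hw, div_le_iff₀ hw, dist_eq_norm]
  exact h.norm_levinsonSum_le (h.norm_weighted_le _) (norm_nonneg _) n i

lemma contractingWith_levinsonMap : ContractingWith (3 / 4) h.levinsonMap :=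
  ⟨by rw [← NNReal.coe_lt_coe]; norm_num, LipschitzWith.of_dist_le_mul fun g g' => by
    simpa using h.dist_levinsonMap_le g g'⟩

theorem exists_solution :
    ∃ z : ℕ → ι → 𝕜, (∀ n, z (n + 1) = (Matrix.diagonal (μ n) + R n) *ᵥ z n) ∧
      Tendsto (z · j) atTop (𝓝 1) ∧ ∀ k, k ≠ j → Tendsto (z · k) atTop (𝓝 0) := by
  set g := ContractingWith.fixedPoint _ h.contractingWith_levinsonMap
  have hg : h.levinsonMap g = g := h.contractingWith_levinsonMap.fixedPoint_isFixedPt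
  set z := weighted θ β j g with hz_def
  have hz := h.norm_weighted_le g
  have heq : ∀ n, z n = Pi.single j 1 + levinsonSum S μ (fun m => R m *ᵥ z m) n := by
    intro n
    ext i
    have hw : (levinsonWeight θ β j n i : 𝕜) ≠ 0 := RCLike.ofReal_ne_zero.2 (h.weight_pos n i).ne'
    rw [hz_def, weighted, ← hg, levinsonMap_apply, mul_div_cancel₀ _ hw, hg]
    rfl
  refine ⟨z, fun n => eq_diagonal_add_mulVec_of_eq_levinsonSum (h.dichotomy n)
    (fun k hk => h.summable_backwardTerm hz (norm_nonneg g) n hk) heq, ?_, fun k hk => ?_⟩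
  · have hzj : ∀ n, z n j - 1 = backwardSum (μ · j) (fun m => (R m *ᵥ z m) j) n := fun n => by
      rw [heq n, Pi.add_apply, Pi.single_eq_same, levinsonSum, if_neg h.not_mem]; ring
    rw [← tendsto_sub_nhds_zero_iff]
    refine squeeze_zero_norm
      (fun n => (hzj n).symm ▸ h.norm_backwardSum_self_le hz (norm_nonneg g) n) ?_
    simpa using ((tendsto_sum_nat_add fun m => β m * geomConv θ β m).const_mul
      (‖g‖ * (Fintype.card ι * (2 / θ))))
  · refine squeeze_zero_norm (a := fun n => ‖g‖ * (2 / θ) * geomConv θ β n)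
      (fun n => (hz n k).trans_eq (by rw [levinsonWeight, if_neg hk]; ring)) ?_
    simpa using ((tendsto_geomConv_zero h.pos.le h.lt_one h.β_nonneg h.summable_sq).const_mul
      (‖g‖ * (2 / θ)))

end SmallPerturbation

lemma SmallPerturbation.of_le [Fintype ι] {θ : ℝ} {j : ι} {S : Finset ι} {μ : ℕ → ι → 𝕜}
    {R : ℕ → Matrix ι ι 𝕜} {β : ℕ → ℝ} (hθ0 : 0 < θ) (hθ1 : θ < 1)
    (hμ : ∀ n, IsDichotomy θ j S (μ n)) (hβ0 : ∀ n, 0 < β n) (hβ : Summable fun n => β n ^ 2)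
    (hR : ∀ n k i, ‖R n k i‖ ≤ β n) (hRjj : ∀ n, R n j j = 0)
    (hβδ : ∀ n, β n ≤ θ * (1 - θ) / (8 * Fintype.card ι))
    (hβ2δ : ∑' n, β n ^ 2 ≤ θ * (1 - θ) / (8 * Fintype.card ι)) :
    SmallPerturbation θ j S μ R β := by
  have hβ0' : ∀ n, 0 ≤ β n := fun n => (hβ0 n).le
  have hC : (0 : ℝ) < Fintype.card ι := Nat.cast_pos.2 (Fintype.card_pos_iff.2 ⟨j⟩)
  have h1θ : 0 < 1 - θ := by linarith
  have hkey : Fintype.card ι * (2 / θ * (2 / (1 - θ) * (θ * (1 - θ) / (8 * Fintype.card ι))))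
      = 1 / 2 := by field_simp; ring
  refine ⟨hθ0, hθ1, hμ, hβ0, hβ, hR, hRjj, fun n => ?_, ?_⟩
  · rw [← hkey]
    gcongr
    exact geomConv_le hθ0.le hθ1 hβ0' hβδ n
  · rw [← hkey]
    gcongr
    exact (tsum_mul_geomConv_le hθ0.le hθ1 hβ0' hβ).trans (by gcongr)

lemma eventually_isDichotomy [Fintype ι] [DecidableEq ι] {θ : ℝ} {j : ι} {μ : ℕ → ι → 𝕜} {ν : ι → 𝕜}
    (hθ0 : 0 < θ) (hμj : ∀ n, μ n j = 1) (hμ : ∀ k, k ≠ j → Tendsto (μ · k) atTop (𝓝 (ν k)))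
    (hθ : ∀ k, k ≠ j → ‖ν k‖ < θ ∨ ‖ν k‖⁻¹ < θ) :
    ∀ᶠ n in atTop, IsDichotomy θ j (univ.filter fun k => k ≠ j ∧ ‖ν k‖ < θ) (μ n) := by
  have hk : ∀ k, ∀ᶠ n in atTop, (k ∈ (univ.filter fun k => k ≠ j ∧ ‖ν k‖ < θ) → ‖μ n k‖ ≤ θ) ∧
      (k ∉ (univ.filter fun k => k ≠ j ∧ ‖ν k‖ < θ) → k ≠ j → μ n k ≠ 0 ∧ ‖(μ n k)⁻¹‖ ≤ θ) := by
    intro k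
    by_cases hkj : k = j
    · exact .of_forall fun n =>
        ⟨fun hkS => ((mem_filter.1 hkS).2.1 hkj).elim, fun _ h => (h hkj).elim⟩
    by_cases hlt : ‖ν k‖ < θ
    · filter_upwards [(hμ k hkj).norm.eventually (gt_mem_nhds hlt)] with n hn
      exact ⟨fun _ => hn.le, fun hkS => (hkS (mem_filter.2 ⟨mem_univ k, hkj, hlt⟩)).elim⟩
    · have hν : ν k ≠ 0 := norm_pos_iff.1 (hθ0.trans_le (not_lt.1 hlt))
      have hinv : ‖(ν k)⁻¹‖ < θ := by rw [norm_inv]; exact (hθ k hkj).resolve_left hlt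
      filter_upwards [(hμ k hkj).eventually_ne hν, ((hμ k hkj).inv₀ hν).norm.eventually
        (gt_mem_nhds hinv)] with n hn0 hn
      exact ⟨fun hkS => (hlt (mem_filter.1 hkS).2.2).elim, fun _ _ => ⟨hn0, hn.le⟩⟩
  filter_upwards [eventually_all.2 hk] with n hn
  exact ⟨hμj n, fun k hkS => (hn k).1 hkS, fun k hkS hkj => (hn k).2 hkS hkj⟩

theorem exists_solution_of_tendsto [Fintype ι] [DecidableEq ι] {j : ι} {μ : ℕ → ι → 𝕜} {ν : ι → 𝕜}
    {R : ℕ → Matrix ι ι 𝕜} {β : ℕ → ℝ} (hμj : ∀ n, μ n j = 1)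
    (hμ : ∀ k, k ≠ j → Tendsto (μ · k) atTop (𝓝 (ν k))) (hν : ∀ k, k ≠ j → ‖ν k‖ ≠ 1)
    (hβ0 : ∀ n, 0 < β n) (hβ : Summable fun n => β n ^ 2)
    (hR : ∀ᶠ n in atTop, ∀ k i, ‖R n k i‖ ≤ β n) (hRjj : ∀ n, R n j j = 0) :
    ∃ N, ∃ z : ℕ → ι → 𝕜, (∀ n, N ≤ n → z (n + 1) = (Matrix.diagonal (μ n) + R n) *ᵥ z n) ∧
      Tendsto (z · j) atTop (𝓝 1) ∧ ∀ k, k ≠ j → Tendsto (z · k) atTop (𝓝 0) := by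
  obtain ⟨θ, hθ0, hθ1, hθ⟩ := exists_pos_lt_one_forall_lt_or_inv_lt (s := univ.erase j)
    (a := fun k => ‖ν k‖) fun k hk => hν k (ne_of_mem_erase hk)
  set δ := θ * (1 - θ) / (8 * Fintype.card ι)
  have hδ : 0 < δ := div_pos (mul_pos hθ0 (by linarith))
    (mul_pos (by norm_num) (Nat.cast_pos.2 (Fintype.card_pos_iff.2 ⟨j⟩)))
  have htail := tendsto_sum_nat_add fun n => β n ^ 2
  obtain ⟨N₀, hN₀⟩ := eventually_atTop.1 ((eventually_isDichotomy hθ0 hμj hμ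
    fun k hk => hθ k (mem_erase.2 ⟨hk, mem_univ k⟩)).and hR)
  have hsmall :=
    (htail.eventually (ge_mem_nhds hδ)).and (htail.eventually (ge_mem_nhds (pow_pos hδ 2)))
  obtain ⟨N, hN, hNδ, hNδ2⟩ := ((eventually_ge_atTop N₀).and hsmall).exists
  have hsq : Summable fun i => β (i + N) ^ 2 := (summable_nat_add_iff N).2 hβ
  have hP : SmallPerturbation θ j _ (μ <| · + N) (R <| · + N) (β <| · + N) :=
    .of_le hθ0 hθ1 (fun n => (hN₀ (n + N) (by omega)).1) (fun n => hβ0 _) hsq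
      (fun n => (hN₀ (n + N) (by omega)).2) (fun n => hRjj _)
      (fun i => (pow_le_pow_iff_left₀ (hβ0 _).le hδ.le two_ne_zero).1
        ((hsq.le_tsum i fun _ _ => sq_nonneg _).trans hNδ2)) hNδ
  obtain ⟨z, hz, hzj, hzk⟩ := hP.exists_solution
  refine ⟨N, fun n => z (n - N), fun n hn => ?_, hzj.comp (tendsto_sub_atTop_nat N),
    fun k hk => (hzk k hk).comp (tendsto_sub_atTop_nat N)⟩
  obtain ⟨m, rfl⟩ := Nat.exists_eq_add_of_le' hn
  simpa only [show m + N + 1 - N = m + 1 by omega, Nat.add_sub_cancel] using hz m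

end Levinson

lemma exists_pos_summable_sq_norm_le {ι κ E : Type*} [Fintype ι] [Fintype κ]
    [SeminormedAddCommGroup E] {A : ℕ → Matrix ι κ E}
    (hA : Summable fun n => ∑ i, ∑ k, ‖A n i k‖ ^ 2) :
    ∃ β : ℕ → ℝ, (∀ n, 0 < β n) ∧ (Summable fun n => β n ^ 2) ∧ ∀ n i k, ‖A n i k‖ ≤ β n := by
  have hS : ∀ n, 0 ≤ ∑ i, ∑ k, ‖A n i k‖ ^ 2 + (1 / 4 : ℝ) ^ n := fun n => by positivity
  refine ⟨fun n => √(∑ i, ∑ k, ‖A n i k‖ ^ 2 + (1 / 4 : ℝ) ^ n),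
    fun n => Real.sqrt_pos.2 (by positivity), ?_, fun n i k => ?_⟩
  · simp_rw [Real.sq_sqrt (hS _)]
    exact hA.add (summable_geometric_of_lt_one (by norm_num) (by norm_num))
  · refine (Real.le_sqrt (norm_nonneg _) (hS n)).2 ?_
    calc ‖A n i k‖ ^ 2 ≤ ∑ k', ‖A n i k'‖ ^ 2 :=
          single_le_sum (f := fun k' => ‖A n i k'‖ ^ 2) (fun _ _ => sq_nonneg _) (mem_univ k)
      _ ≤ ∑ i', ∑ k', ‖A n i' k'‖ ^ 2 :=
          single_le_sum (f := fun i' => ∑ k', ‖A n i' k'‖ ^ 2) (fun _ _ => by positivity)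
            (mem_univ i)
      _ ≤ _ := le_add_of_nonneg_right (by positivity)

lemma smul_diagonal_add_of_ne {ι 𝕜 : Type*} [Fintype ι] [DecidableEq ι] [Field 𝕜] {l : ι → 𝕜}
    {A : Matrix ι ι 𝕜} {j : ι} (hc : l j + A j j ≠ 0) :
    (l j + A j j) • (Matrix.diagonal (fun k => if k = j then 1 else l k / (l j + A j j)) +
      Matrix.of fun k i => if k = j ∧ i = j then 0 else A k i / (l j + A j j)) =
      Matrix.diagonal l + A := by
  ext k i
  simp only [Matrix.smul_apply, Matrix.add_apply, Matrix.of_apply, Matrix.diagonal_apply,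
    smul_eq_mul]
  split_ifs <;> subst_vars <;> field_simp <;> simp_all

theorem exists_normalized_solution {ι 𝕜 : Type*} [Fintype ι] [DecidableEq ι] [RCLike 𝕜]
    {l : ι → 𝕜} {A : ℕ → Matrix ι ι 𝕜} {j : ι} (hlj : l j ≠ 0)
    (hA : Summable fun n => ∑ i, ∑ k, ‖A n i k‖ ^ 2) (hsep : ∀ k, k ≠ j → ‖l k‖ ≠ ‖l j‖) :
    ∃ N, ∃ z : ℕ → ι → 𝕜,
      (∀ n, N ≤ n → (l j + A n j j) • z (n + 1) = (Matrix.diagonal l + A n) *ᵥ z n) ∧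
      Tendsto (z · j) atTop (𝓝 1) ∧ ∀ k, k ≠ j → Tendsto (z · k) atTop (𝓝 0) := by
  obtain ⟨β, hβ0, hβ, hAβ⟩ := exists_pos_summable_sq_norm_le hA
  have hlj' : 0 < ‖l j‖ := norm_pos_iff.2 hlj
  have hc : Tendsto (fun n => l j + A n j j) atTop (𝓝 (l j)) := by
    have hβlim : Tendsto β atTop (𝓝 0) := by
      simpa [Real.sqrt_sq (hβ0 _).le] using hβ.tendsto_atTop_zero.sqrt
    simpa using tendsto_const_nhds.add (squeeze_zero_norm (fun n => hAβ n j j) hβlim)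
  have hcN : ∀ᶠ n in atTop, ‖l j‖ / 2 < ‖l j + A n j j‖ :=
    hc.norm.eventually (lt_mem_nhds (half_lt_self hlj'))
  have hR : ∀ᶠ n in atTop, ∀ k i,
      ‖(Matrix.of fun k i => if k = j ∧ i = j then 0 else A n k i / (l j + A n j j)) k i‖ ≤
        2 / ‖l j‖ * β n := hcN.mono fun n hn k i => by
    have hc0 : 0 < ‖l j + A n j j‖ := (half_pos hlj').trans hn
    have hβn : 0 ≤ 2 / ‖l j‖ * β n := (mul_pos (div_pos two_pos hlj') (hβ0 n)).le
    rw [Matrix.of_apply]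
    split_ifs
    · rwa [norm_zero]
    · rw [norm_div, div_le_iff₀ hc0]
      calc ‖A n k i‖ ≤ β n := hAβ n k i
        _ = 2 / ‖l j‖ * β n * (‖l j‖ / 2) := by field_simp
        _ ≤ 2 / ‖l j‖ * β n * ‖l j + A n j j‖ := mul_le_mul_of_nonneg_left hn.le hβn
  obtain ⟨N, z, hz, hzj, hzk⟩ := exists_solution_of_tendsto (j := j)
    (μ := fun n k => if k = j then 1 else l k / (l j + A n j j)) (ν := fun k => l k / l j)
    (fun n => if_pos rfl)
    (fun k hk => by simp only [hk, if_false]; exact tendsto_const_nhds.div hc hlj)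
    (fun k hk => by
      rw [norm_div, ne_eq, div_eq_one_iff_eq (norm_ne_zero_iff.2 hlj)]; exact hsep k hk)
    (fun n => mul_pos (div_pos two_pos hlj') (hβ0 n))
    ((hβ.mul_left ((2 / ‖l j‖) ^ 2)).congr fun n => by ring) hR (fun n => by simp)
  obtain ⟨N', hN'⟩ := eventually_atTop.1 hcN
  refine ⟨max N N', z, fun n hn => ?_, hzj, hzk⟩
  have hc0 : l j + A n j j ≠ 0 :=
    norm_pos_iff.1 ((half_pos hlj').trans (hN' n (le_of_max_le_right hn)))
  rw [hz n (le_of_max_le_left hn), ← Matrix.smul_mulVec, smul_diagonal_add_of_ne hc0]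

theorem coffman_discrete_hartman_wintner_general {d : ℕ}
    (l : Fin d → ℂ) (hl : IsUnit (Matrix.diagonal l))
    (A : ℕ → Matrix (Fin d) (Fin d) ℂ)
    (hA2 : Summable fun n : ℕ => ∑ i : Fin d, ∑ j : Fin d, ‖A n i j‖ ^ 2)
    (hinv : ∀ n, 1 ≤ n → IsUnit (Matrix.diagonal l + A n))
    (j : Fin d) (hsep : ∀ k : Fin d, k ≠ j → ‖l k‖ ≠ ‖l j‖)
    (n₀ : ℕ) (hγ : ∀ k, n₀ ≤ k → l j + A k j j ≠ 0) :
    ∃ y : ℕ → Fin d → ℂ,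
      (∀ n, 1 ≤ n → y (n + 1) = (Matrix.diagonal l + A n).mulVec (y n)) ∧
      Tendsto (fun n => y n j / ∏ k ∈ Finset.Ico n₀ n, (l j + A k j j)) atTop (𝓝 1) ∧
      (∀ k : Fin d, k ≠ j →
        Tendsto (fun n => y n k / ∏ k' ∈ Finset.Ico n₀ n, (l j + A k' j j)) atTop (𝓝 0)) := by
  obtain ⟨N, z, hz, hzj, hzk⟩ :=
    exists_normalized_solution ((Matrix.isUnit_diagonal.1 hl).apply j).ne_zero hA2 hsep
  set γ : ℕ → ℂ := fun n => ∏ k ∈ Finset.Ico n₀ n, (l j + A k j j)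
  have hγ0 : ∀ n, γ n ≠ 0 := fun n => prod_ne_zero_iff.2 fun k hk => hγ k (mem_Ico.1 hk).1
  obtain ⟨y, hy, hyz⟩ := exists_solution_eq_of_ge (fun n => Matrix.diagonal l + A n) (a := 1)
    (N := max N n₀) (fun n hn _ => hinv n hn) (y := fun n => γ n • z n) fun n hn => by
      simp only [γ]
      rw [prod_Ico_succ_top (le_of_max_le_right hn), mul_smul,
        hz n (le_of_max_le_left hn), Matrix.mulVec_smul]
  have hdiv : ∀ k, (fun n => y n k / γ n) =ᶠ[atTop] fun n => z n k := fun k => by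
    filter_upwards [eventually_ge_atTop (max N n₀)] with n hn
    rw [hyz n hn, Pi.smul_apply, smul_eq_mul, mul_div_cancel_left₀ _ (hγ0 n)]
  exact ⟨y, hy, hzj.congr' (hdiv j).symm, fun k hk => (hzk k hk).congr' (hdiv k).symm⟩

/-- **Coffman's discrete Hartman–Wintner theorem.** Let `Λ = diag(λ_1, …, λ_d)` be an
invertible diagonal matrix and `{A_n}` matrices with `Σ ‖A_n‖² < ∞` (stated here with the
entrywise square sum, equivalent to any fixed matrix norm) such that `Λ + A_n` is
invertible for all `n`. Fix `j` with `|λ_k| ≠ |λ_j|` for `k ≠ j`, and let `n₀ ≥ 1` be such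
that `λ_j + (A_k)_{j,j} ≠ 0` for `k ≥ n₀`; put `γ_j(n) = Π_{k=n₀}^{n-1} (λ_j + (A_k)_{j,j})`.
Then some solution of `y_{n+1} = (Λ + A_n) y_n` satisfies `y_{n,j}/γ_j(n) → 1` and
`y_{n,k}/γ_j(n) → 0` for `k ≠ j`. -/
theorem coffman_discrete_hartman_wintner {d : ℕ}
    (l : Fin d → ℂ) (hl : IsUnit (Matrix.diagonal l))
    (A : ℕ → Matrix (Fin d) (Fin d) ℂ)
    (hA2 : Summable fun n : ℕ => ∑ i : Fin d, ∑ j : Fin d, ‖A n i j‖ ^ 2)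
    (hinv : ∀ n, 1 ≤ n → IsUnit (Matrix.diagonal l + A n))
    (j : Fin d) (hsep : ∀ k : Fin d, k ≠ j → ‖l k‖ ≠ ‖l j‖)
    (n₀ : ℕ) (hn₀ : 1 ≤ n₀) (hγ : ∀ k, n₀ ≤ k → l j + A k j j ≠ 0) :
    ∃ y : ℕ → Fin d → ℂ,
      (∀ n, 1 ≤ n → y (n + 1) = (Matrix.diagonal l + A n).mulVec (y n)) ∧
      Tendsto (fun n => y n j / ∏ k ∈ Finset.Ico n₀ n, (l j + A k j j)) atTop (𝓝 1) ∧
      (∀ k : Fin d, k ≠ j →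
        Tendsto (fun n => y n k / ∏ k' ∈ Finset.Ico n₀ n, (l j + A k' j j)) atTop (𝓝 0)) :=
  coffman_discrete_hartman_wintner_general l hl A hA2 hinv j hsep n₀ hγ
end
end

section
/- Let Λ be a d×d complex diagonal matrix with diagonal entries λ_1, …, λ_d satisfying |λ_1| > |λ_2| > … > |λ_d| > 0, and let {A_n}_{n≥1} be d×d complex matrices such that Σ_{n=1}^∞ ‖A_n‖² < ∞, Λ + A_n is invertible for every n, and for each j the partial sums Σ_{n=1}^N (A_n)_{j,j} have a finite limit as N → ∞. Then for any initial vector y_1 ≠ 0, the solution of y_{n+1} = (Λ + A_n) y_n admits an index j and a constant c_j ≠ 0 such that y_{n,j}/λ_j^n → c_j as n → ∞, while y_{n,k}/λ_j^n → 0 as n → ∞ for every k ≠ j. -/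
/-!
Write `u n k = ‖y n k‖`, with the sup norm on vectors and the induced operator norm on matrices.
Since `y (n + 1) k - l k * y n k = (A n *ᵥ y n) k`, we get
`|u (n + 1) k - ‖l k‖ u n k| ≤ ‖A n‖ ‖y n‖`, and `‖A n‖` is square summable.

Cut the coordinates into `k ≤ i` and `k > i`; the gap `‖l i‖ > ‖l (i + 1)‖` forces a dichotomy.
If, late enough, the maximum over the first block reaches the maximum over the second, it stays
ahead and the ratio second/first obeys a contracting forward recursion; otherwise the ratio
first/second obeys a contracting backward recursion. Either way the ratio is in `ℓ²`. The least
`j` whose cut after `j` is of the first kind is the dominant coordinate: `‖y n k‖ ≤ R n ‖y n j‖`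
for `k ≠ j`, with `R ∈ ℓ²`.

Then `y (n + 1) j = l j (1 + w n) y n j` with `w n = A n j j / l j + O(‖A n‖ R n)`. The partial
sums of `w` converge (hypothesis on the diagonal, and `ℓ² · ℓ² ⊆ ℓ¹`) and `w ∈ ℓ²`, so
`∑ log (1 + w n)` converges and `y n j / l j ^ n` tends to a nonzero limit.
-/

open Filter Topology NNReal Finset

namespace NNReal

theorem sq_le_mul_sq_add_of_le_mul_add {q s t b : ℝ≥0} (hq : q < 1) (h : s ≤ q * t + b) :
    s ^ 2 ≤ q * t ^ 2 + b ^ 2 / (1 - q) := by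
  have hq' : (0 : ℝ) < 1 - q := sub_pos.2 (by exact_mod_cast hq)
  rw [← NNReal.coe_le_coe]
  push_cast [NNReal.coe_sub hq.le]
  calc (s : ℝ) ^ 2 ≤ (q * t + b) ^ 2 := pow_le_pow_left₀ s.coe_nonneg (by exact_mod_cast h) 2
    _ ≤ q * t ^ 2 + b ^ 2 / (1 - q) := by
      rw [← sub_nonneg]
      have : q * (t : ℝ) ^ 2 + b ^ 2 / (1 - q) - (q * t + b) ^ 2
          = q * ((1 - q) * t - b) ^ 2 / (1 - q) := by
        field_simp
        ring
      rw [this]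
      positivity

theorem le_div_one_sub_of_le_mul_add {q x c : ℝ≥0} (hq : q < 1) (h : x ≤ q * x + c) :
    x ≤ c / (1 - q) := by
  rw [le_div_iff₀ (tsub_pos_of_lt hq), mul_tsub, mul_one, tsub_le_iff_right, mul_comm, add_comm]
  exact h

theorem summable_of_succ_le_mul_add {x c : ℕ → ℝ≥0} {q : ℝ≥0} (hq : q < 1) (hc : Summable c)
    (hx : ∀ᶠ n in atTop, x (n + 1) ≤ q * x n + c n) : Summable x := by
  obtain ⟨N, hN⟩ := eventually_atTop.1 hx
  rw [← NNReal.summable_nat_add_iff N]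
  have hcN := (NNReal.summable_nat_add_iff N).2 hc
  refine NNReal.summable_of_sum_range_le fun m =>
    le_div_one_sub_of_le_mul_add (c := x N + ∑' i, c (i + N)) hq ?_
  calc ∑ i ∈ range m, x (i + N)
      ≤ ∑ i ∈ range (m + 1), x (i + N) := sum_le_sum_of_subset (range_subset_range.2 m.le_succ)
    _ = ∑ i ∈ range m, x (i + N + 1) + x N := by
        simp only [sum_range_succ', zero_add, add_right_comm]
    _ ≤ ∑ i ∈ range m, (q * x (i + N) + c (i + N)) + x N := by
        gcongr with i
        exact hN _ (Nat.le_add_left N i)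
    _ ≤ q * ∑ i ∈ range m, x (i + N) + (x N + ∑' i, c (i + N)) := by
        rw [sum_add_distrib, ← mul_sum, add_assoc, add_comm (∑ i ∈ range m, _)]
        gcongr
        exact hcN.sum_le_tsum _ fun _ _ => zero_le

theorem summable_of_le_mul_succ_add {x c : ℕ → ℝ≥0} {q B : ℝ≥0} (hq : q < 1) (hc : Summable c)
    (hB : ∀ᶠ n in atTop, x n ≤ B) (hx : ∀ᶠ n in atTop, x n ≤ q * x (n + 1) + c n) :
    Summable x := by
  obtain ⟨N, hN⟩ := eventually_atTop.1 (hB.and hx)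
  rw [← NNReal.summable_nat_add_iff N]
  have hcN := (NNReal.summable_nat_add_iff N).2 hc
  refine NNReal.summable_of_sum_range_le fun m =>
    le_div_one_sub_of_le_mul_add (c := B + ∑' i, c (i + N)) hq ?_
  calc ∑ i ∈ range m, x (i + N)
      ≤ ∑ i ∈ range m, (q * x (i + 1 + N) + c (i + N)) := by
        gcongr with i
        rw [add_right_comm]
        exact (hN _ (Nat.le_add_left N i)).2
    _ ≤ q * ∑ i ∈ range (m + 1), x (i + N) + ∑' i, c (i + N) := by
        rw [sum_add_distrib, ← mul_sum, sum_range_succ' (fun i => x (i + N))]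
        gcongr
        · exact le_self_add
        · exact hcN.sum_le_tsum _ fun _ _ => zero_le
    _ ≤ q * ∑ i ∈ range m, x (i + N) + (B + ∑' i, c (i + N)) := by
        rw [sum_range_succ, mul_add, add_assoc]
        gcongr
        exact (mul_le_of_le_one_left zero_le hq.le).trans (hN _ (Nat.le_add_left N m)).1

theorem summable_mul_of_summable_sq {f g : ℕ → ℝ≥0} (hf : Summable fun n => f n ^ 2)
    (hg : Summable fun n => g n ^ 2) : Summable fun n => f n * g n :=
  NNReal.summable_of_le (fun _ => (le_mul_of_one_le_left zero_le one_le_two).trans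
    ((mul_assoc 2 _ _).symm.le.trans (two_mul_le_add_sq _ _))) (hf.add hg)

theorem tendsto_atTop_zero_of_summable_sq {f : ℕ → ℝ≥0} (hf : Summable fun n => f n ^ 2) :
    Tendsto f atTop (𝓝 0) := by
  simpa [Function.comp_def] using
    (NNReal.continuous_sqrt.tendsto 0).comp (NNReal.tendsto_atTop_zero_of_summable hf)

theorem div_le_of_mul_le_of_le_mul_add {μ ν a p p' s s' : ℝ≥0} (hμ : 0 < μ) (hp : 0 < p)
    (hp' : μ * p ≤ p') (hs' : s' ≤ ν * s + a * p) : s' / p' ≤ ν / μ * (s / p) + a / μ := by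
  calc s' / p' ≤ (ν * s + a * p) / (μ * p) := div_le_div₀ zero_le hs' (mul_pos hμ hp) hp'
    _ = ν / μ * (s / p) + a / μ := by field_simp

theorem div_le_of_mul_le_add_of_le_mul_add {μ ν a p p' s s' : ℝ≥0} (hμ : 0 < μ) (hs : 0 < s)
    (hp : μ * p ≤ p' + a * s) (hs' : s' ≤ ν * s + a * s) (hps' : p' ≤ s') :
    p / s ≤ ν / μ * (p' / s') + 2 * a / μ := by
  rw [div_le_iff₀ hs, ← mul_le_mul_iff_right₀ hμ]
  have ht : p' / s' ≤ 1 := div_le_one_of_le₀ hps' zero_le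
  have hp' : p' ≤ p' / s' * (ν * s + a * s) := by
    rcases eq_zero_or_pos s' with h | h
    · simp [h] at hps'
      simp [hps']
    · calc p' = p' / s' * s' := (div_mul_cancel₀ _ h.ne').symm
        _ ≤ _ := by gcongr
  calc μ * p ≤ p' + a * s := hp
    _ ≤ p' / s' * (ν * s) + p' / s' * (a * s) + a * s := by rw [← mul_add]; gcongr
    _ ≤ p' / s' * (ν * s) + 1 * (a * s) + a * s := by gcongr
    _ = μ * ((ν / μ * (p' / s') + 2 * a / μ) * s) := by field_simp; ring

section Dichotomy

variable {μ ν : ℝ≥0} {P S a : ℕ → ℝ≥0}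

theorem summable_sq_div_of_le {ε : ℝ≥0} {N n₁ : ℕ} (hε : 0 < ε) (hμ : ν + 2 * ε ≤ μ)
    (ha : Summable fun n => a n ^ 2)
    (hP : ∀ n ≥ N, μ * P n ≤ P (n + 1) + a n * (P n ⊔ S n))
    (hS : ∀ n ≥ N, S (n + 1) ≤ ν * S n + a n * (P n ⊔ S n))
    (hpos : ∀ n ≥ N, 0 < P n ⊔ S n) (haε : ∀ n ≥ N, a n < ε)
    (hn₁ : N ≤ n₁) (hstart : S n₁ ≤ P n₁) :
    Summable (fun n => (S n / P n) ^ 2) ∧ ∀ n ≥ n₁, 0 < P n := by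
  have hstep : ∀ n ≥ n₁, S n ≤ P n →
      0 < P n ∧ (ν + ε) * P n ≤ P (n + 1) ∧ S (n + 1) ≤ ν * S n + a n * P n := by
    intro n hn hSP
    have hPn := hP n (hn₁.trans hn)
    have hSn := hS n (hn₁.trans hn)
    have hpn := hpos n (hn₁.trans hn)
    rw [sup_eq_left.2 hSP] at hPn hSn hpn
    refine ⟨hpn, ?_, hSn⟩
    rw [← add_le_add_iff_right (ε * P n), ← add_mul, add_assoc, ← two_mul]
    calc (ν + 2 * ε) * P n ≤ μ * P n := by gcongr
      _ ≤ P (n + 1) + a n * P n := hPn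
      _ ≤ P (n + 1) + ε * P n := by gcongr; exact (haε n (hn₁.trans hn)).le
  have hinv : ∀ n ≥ n₁, S n ≤ P n := by
    intro n hn
    induction n, hn using Nat.le_induction with
    | base => exact hstart
    | succ n hn ih =>
      obtain ⟨-, hPn, hSn⟩ := hstep n hn ih
      calc S (n + 1) ≤ ν * S n + a n * P n := hSn
        _ ≤ (ν + ε) * P n := by rw [add_mul]; gcongr; exact (haε n (hn₁.trans hn)).le
        _ ≤ P (n + 1) := hPn
  have hq : ν / (ν + ε) < 1 := (div_lt_one (by positivity)).2 (lt_add_of_pos_right _ hε)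
  refine ⟨summable_of_succ_le_mul_add hq (c := fun n => (a n / (ν + ε)) ^ 2 / (1 - ν / (ν + ε)))
    (by simpa only [div_pow] using (ha.div_const _).div_const _) ?_,
    fun n hn => (hstep n hn (hinv n hn)).1⟩
  filter_upwards [eventually_ge_atTop n₁] with n hn
  obtain ⟨hPn, hPn', hSn'⟩ := hstep n hn (hinv n hn)
  exact sq_le_mul_sq_add_of_le_mul_add hq
    (div_le_of_mul_le_of_le_mul_add (by positivity) hPn hPn' hSn')

theorem summable_sq_div_of_lt (hνμ : ν < μ) (ha : Summable fun n => a n ^ 2)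
    (hP : ∀ᶠ n in atTop, μ * P n ≤ P (n + 1) + a n * (P n ⊔ S n))
    (hS : ∀ᶠ n in atTop, S (n + 1) ≤ ν * S n + a n * (P n ⊔ S n))
    (hlt : ∀ᶠ n in atTop, P n < S n) :
    Summable fun n => (P n / S n) ^ 2 := by
  have hμ : 0 < μ := hνμ.bot_lt
  have hq : ν / μ < 1 := (div_lt_one hμ).2 hνμ
  refine summable_of_le_mul_succ_add hq (B := 1) (c := fun n => (2 * a n / μ) ^ 2 / (1 - ν / μ))
    (by simpa only [div_pow, mul_pow] using ((ha.mul_left _).div_const _).div_const _) ?_ ?_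
  · filter_upwards [hlt] with n hn
    exact pow_le_one₀ zero_le (div_le_one_of_le₀ hn.le zero_le)
  · filter_upwards [hP, hS, hlt, (tendsto_add_atTop_nat 1).eventually hlt] with n hPn hSn hn hn1
    rw [sup_eq_right.2 hn.le] at hPn hSn
    exact sq_le_mul_sq_add_of_le_mul_add hq
      (div_le_of_mul_le_add_of_le_mul_add hμ (zero_le.trans_lt hn) hPn hSn hn1.le)

theorem exists_summable_sq_dichotomy (hνμ : ν < μ) (ha : Summable fun n => a n ^ 2)
    (hP : ∀ᶠ n in atTop, μ * P n ≤ P (n + 1) + a n * (P n ⊔ S n))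
    (hS : ∀ᶠ n in atTop, S (n + 1) ≤ ν * S n + a n * (P n ⊔ S n))
    (hpos : ∀ᶠ n in atTop, 0 < P n ⊔ S n) :
    ∃ r : ℕ → ℝ≥0, Summable (fun n => r n ^ 2) ∧
      ((∀ᶠ n in atTop, S n ≤ r n * P n) ∨ ∀ᶠ n in atTop, P n ≤ r n * S n) := by
  obtain ⟨ε, hε, hμ⟩ : ∃ ε > 0, ν + 2 * ε ≤ μ := by
    obtain ⟨δ, hδ, rfl⟩ := exists_pos_add_of_lt' hνμ
    exact ⟨δ / 2, half_pos hδ, by rw [mul_div_cancel₀ _ two_ne_zero]⟩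
  obtain ⟨N, hN⟩ := eventually_atTop.1 (hP.and (hS.and (hpos.and
    ((tendsto_order.1 (tendsto_atTop_zero_of_summable_sq ha)).2 ε hε))))
  simp only [imp_and, forall_and] at hN
  obtain ⟨hPN, hSN, hposN, haN⟩ := hN
  by_cases hfwd : ∃ n₁ ≥ N, S n₁ ≤ P n₁
  · obtain ⟨n₁, hn₁, hSP⟩ := hfwd
    obtain ⟨hsum, hP0⟩ := summable_sq_div_of_le hε hμ ha hPN hSN hposN haN hn₁ hSP
    refine ⟨_, hsum, Or.inl ?_⟩
    filter_upwards [eventually_ge_atTop n₁] with n hn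
    exact (div_mul_cancel₀ _ (hP0 n hn).ne').ge
  · push Not at hfwd
    have hlt : ∀ᶠ n in atTop, P n < S n := eventually_atTop.2 ⟨N, hfwd⟩
    refine ⟨_, summable_sq_div_of_lt hνμ ha hP hS hlt, Or.inr ?_⟩
    filter_upwards [hlt] with n hn
    exact (div_mul_cancel₀ _ (zero_le.trans_lt hn).ne').ge

end Dichotomy

end NNReal

section Dominance

theorem Finset.mul_sup_le_sup_add {ι : Type*} {μ c : ℝ≥0} {lam u u' : ι → ℝ≥0} (s : Finset ι)
    (hμ : ∀ k ∈ s, μ ≤ lam k) (h : ∀ k ∈ s, lam k * u k ≤ u' k + c) :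
    μ * s.sup u ≤ s.sup u' + c := by
  rw [NNReal.mul_finset_sup]
  exact Finset.sup_le fun k hk =>
    (mul_le_mul_left (hμ k hk) _).trans ((h k hk).trans (by gcongr; exact le_sup hk))

theorem Finset.sup_le_mul_sup_add {ι : Type*} {ν c : ℝ≥0} {lam u u' : ι → ℝ≥0} (s : Finset ι)
    (hν : ∀ k ∈ s, lam k ≤ ν) (h : ∀ k ∈ s, u' k ≤ lam k * u k + c) :
    s.sup u' ≤ ν * s.sup u + c :=
  Finset.sup_le fun k hk => (h k hk).trans (by gcongr; exacts [hν k hk, le_sup hk])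

variable {ι : Type*} [Fintype ι] [LinearOrder ι]

def supIic (u : ι → ℝ≥0) (i : ι) : ℝ≥0 := (univ.filter (· ≤ i)).sup u

def supIoi (u : ι → ℝ≥0) (i : ι) : ℝ≥0 := (univ.filter (i < ·)).sup u

theorem sup_eq_supIic_sup_supIoi (u : ι → ℝ≥0) (i : ι) :
    univ.sup u = supIic u i ⊔ supIoi u i := by
  classical
  rw [supIic, supIoi, ← Finset.sup_union]
  congr 1
  ext k
  simpa using le_or_gt k i

theorem sup_eq_apply_and_le_mul_apply (u : ι → ℝ≥0) {r : ℝ≥0} {j : ι} (hr : r < 1)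
    (hU : 0 < univ.sup u) (hF : supIoi u j ≤ r * supIic u j)
    (hB : ∀ k < j, supIic u k ≤ r * supIoi u k) :
    univ.sup u = u j ∧ ∀ k ≠ j, u k ≤ r * u j := by
  have hUP : univ.sup u = supIic u j := by
    rw [sup_eq_supIic_sup_supIoi u j,
      sup_eq_left.2 (hF.trans (mul_le_of_le_one_left zero_le hr.le))]
  have hbelow : ∀ k < j, u k ≤ r * supIic u j := fun k hk =>
    calc u k ≤ supIic u k := le_sup (by simp)
      _ ≤ r * supIoi u k := hB k hk
      _ ≤ r * supIic u j := by
        gcongr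
        rw [← hUP]
        exact sup_mono (filter_subset _ _)
  have hPj : supIic u j = u j := by
    refine le_antisymm ?_ (le_sup (by simp))
    have : supIic u j ≤ u j ⊔ r * supIic u j := Finset.sup_le fun k hk => by
      rcases (mem_filter.1 hk).2.lt_or_eq with h | rfl
      exacts [le_sup_of_le_right (hbelow k h), le_sup_left]
    refine (le_sup_iff.1 this).resolve_right fun h => h.not_gt ?_
    exact mul_lt_of_lt_one_left (hUP ▸ hU) hr
  refine ⟨hUP.trans hPj, fun k hk => ?_⟩
  rcases hk.lt_or_gt with h | h
  · exact hPj ▸ hbelow k h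
  · calc u k ≤ supIoi u j := le_sup (by simpa using h)
      _ ≤ r * u j := hPj ▸ hF

theorem exists_block_dichotomy {lam : ι → ℝ≥0} (hlam : StrictAnti lam) (hlam0 : ∀ i, 0 < lam i)
    {u : ℕ → ι → ℝ≥0} {a : ℕ → ℝ≥0} (ha : Summable fun n => a n ^ 2)
    (hu : ∀ᶠ n in atTop, ∀ k, nndist (u (n + 1) k) (lam k * u n k) ≤ a n * univ.sup (u n))
    (hU : ∀ᶠ n in atTop, 0 < univ.sup (u n)) (i : ι) :
    ∃ r : ℕ → ℝ≥0, Summable (fun n => r n ^ 2) ∧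
      ((∀ᶠ n in atTop, supIoi (u n) i ≤ r n * supIic (u n) i) ∨
        ∀ᶠ n in atTop, supIic (u n) i ≤ r n * supIoi (u n) i) := by
  refine NNReal.exists_summable_sq_dichotomy (μ := lam i) (ν := supIoi lam i) ?_ ha ?_ ?_ ?_
  · exact (Finset.sup_lt_iff (hlam0 i)).2 fun k hk => hlam (by simpa using hk)
  · filter_upwards [hu] with n hn
    rw [← sup_eq_supIic_sup_supIoi]
    refine Finset.mul_sup_le_sup_add _ (fun k hk => hlam.antitone (by simpa using hk))
      fun k _ => (NNReal.le_add_nndist (lam k * u n k) (u (n + 1) k)).trans ?_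
    rw [nndist_comm]
    gcongr
    exact hn k
  · filter_upwards [hu] with n hn
    rw [← sup_eq_supIic_sup_supIoi]
    exact Finset.sup_le_mul_sup_add _ (fun k hk => le_sup hk)
      fun k _ => (NNReal.le_add_nndist _ _).trans (by gcongr; exact hn k)
  · simpa only [← sup_eq_supIic_sup_supIoi] using hU

theorem exists_dominant_index {lam : ι → ℝ≥0} (hlam : StrictAnti lam) (hlam0 : ∀ i, 0 < lam i)
    {u : ℕ → ι → ℝ≥0} {a : ℕ → ℝ≥0} (ha : Summable fun n => a n ^ 2)
    (hu : ∀ᶠ n in atTop, ∀ k, nndist (u (n + 1) k) (lam k * u n k) ≤ a n * univ.sup (u n))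
    (hU : ∀ᶠ n in atTop, 0 < univ.sup (u n)) :
    ∃ j, ∃ R : ℕ → ℝ≥0, Summable (fun n => R n ^ 2) ∧
      ∀ᶠ n in atTop, univ.sup (u n) = u n j ∧ ∀ k ≠ j, u n k ≤ R n * u n j := by
  choose r hr hrF using exists_block_dichotomy hlam hlam0 ha hu hU
  set R : ℕ → ℝ≥0 := fun n => ∑ i, r i n
  have hR : Summable fun n => R n ^ 2 :=
    NNReal.summable_of_le (fun n => sq_sum_le_card_mul_sum_sq)
      ((summable_sum fun i _ => hr i).mul_left _)
  have hrR : ∀ i n, r i n ≤ R n := fun i n =>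
    single_le_sum (f := fun i => r i n) (fun _ _ => zero_le) (mem_univ i)
  set F : ι → Prop := fun i => ∀ᶠ n in atTop, supIoi (u n) i ≤ R n * supIic (u n) i
  have hFB : ∀ i, F i ∨ ∀ᶠ n in atTop, supIic (u n) i ≤ R n * supIoi (u n) i := fun i =>
    (hrF i).imp (Eventually.mono · fun n h => h.trans (by gcongr; exact hrR i n))
      (Eventually.mono · fun n h => h.trans (by gcongr; exact hrR i n))
  obtain ⟨top, htop⟩ : ∃ top : ι, ∀ k, k ≤ top := by
    obtain ⟨k, -, -⟩ := Finset.lt_sup_iff.1 hU.exists.choose_spec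
    have : Nonempty ι := ⟨k⟩
    exact Finite.exists_max id
  have hFtop : F top := Eventually.of_forall fun n => by
    rw [supIoi, filter_eq_empty_iff.2 fun k _ => not_lt.2 (htop k), sup_empty]
    exact zero_le
  obtain ⟨j, hj⟩ := exists_minimal_of_wellFoundedLT F ⟨top, hFtop⟩
  have hB : ∀ᶠ n in atTop, ∀ k, k < j → supIic (u n) k ≤ R n * supIoi (u n) k :=
    eventually_all.2 fun k => eventually_imp_distrib_left.2 fun hk =>
      (hFB k).resolve_left (hj.not_prop_of_lt hk)
  refine ⟨j, R, hR, ?_⟩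
  filter_upwards [hj.prop, hB, hU,
    (NNReal.tendsto_atTop_zero_of_summable_sq hR).eventually_lt_const one_pos] with n hF hB hU hR1
  exact sup_eq_apply_and_le_mul_apply (u n) hR1 hU hF hB

end Dominance

attribute [local instance] Matrix.linftyOpSeminormedAddCommGroup

namespace Matrix

variable {m n α : Type*} [Fintype m] [Fintype n]

theorem linfty_opNNNorm_sq_le [SeminormedAddCommGroup α] (A : Matrix m n α) :
    ‖A‖₊ ^ 2 ≤ Fintype.card n * ∑ i, ∑ j, ‖A i j‖₊ ^ 2 := by
  rw [← NNReal.le_sqrt_iff_sq_le, linfty_opNNNorm_def]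
  refine Finset.sup_le fun i _ => NNReal.le_sqrt_iff_sq_le.2 ?_
  calc (∑ j, ‖A i j‖₊) ^ 2 ≤ Fintype.card n * ∑ j, ‖A i j‖₊ ^ 2 := sq_sum_le_card_mul_sum_sq
    _ ≤ Fintype.card n * ∑ i, ∑ j, ‖A i j‖₊ ^ 2 := by
      gcongr
      exact single_le_sum (f := fun i => ∑ j, ‖A i j‖₊ ^ 2) (fun _ _ => zero_le) (mem_univ i)

theorem nnnorm_mulVec_apply_le [NonUnitalSeminormedRing α] (A : Matrix m n α) (v : n → α)
    (i : m) : ‖(A *ᵥ v) i‖₊ ≤ ‖A‖₊ * ‖v‖₊ :=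
  (nnnorm_le_pi_nnnorm _ i).trans (linfty_opNNNorm_mulVec A v)

theorem diagonal_add_mulVec_apply [DecidableEq n] [NonUnitalNonAssocSemiring α] (l : n → α)
    (A : Matrix n n α) (v : n → α) (k : n) :
    ((diagonal l + A) *ᵥ v) k = l k * v k + (A *ᵥ v) k := by
  rw [add_mulVec, Pi.add_apply, mulVec_diagonal]

theorem nndist_nnnorm_diagonal_add_mulVec_apply_le [DecidableEq n] [SeminormedRing α]
    [NormMulClass α] (l : n → α) (A : Matrix n n α) (v : n → α) (k : n) :
    nndist ‖((diagonal l + A) *ᵥ v) k‖₊ (‖l k‖₊ * ‖v k‖₊) ≤ ‖A‖₊ * ‖v‖₊ := by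
  rw [← nnnorm_mul]
  refine (nndist_nnnorm_nnnorm_le _ _).trans ?_
  rw [diagonal_add_mulVec_apply, add_sub_cancel_left]
  exact nnnorm_mulVec_apply_le _ _ _

variable {𝕜 : Type*} [NormedField 𝕜]

theorem nnnorm_mulVec_apply_div_le (A : Matrix n n 𝕜) {v : n → 𝕜} {j : n} (c : 𝕜)
    (hv : ‖v‖₊ = ‖v j‖₊) (hvj : v j ≠ 0) : ‖(A *ᵥ v) j / (c * v j)‖₊ ≤ ‖A‖₊ / ‖c‖₊ :=
  calc ‖(A *ᵥ v) j / (c * v j)‖₊ = ‖(A *ᵥ v) j‖₊ / (‖c‖₊ * ‖v‖₊) := by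
        rw [nnnorm_div, nnnorm_mul, hv]
    _ ≤ ‖A‖₊ * ‖v‖₊ / (‖c‖₊ * ‖v‖₊) := by gcongr; exact nnnorm_mulVec_apply_le _ _ _
    _ = ‖A‖₊ / ‖c‖₊ := mul_div_mul_right _ _ (hv ▸ nnnorm_ne_zero_iff.2 hvj)

theorem nnnorm_mulVec_apply_div_sub_div_le [DecidableEq n] (A : Matrix n n 𝕜) {v : n → 𝕜}
    {j : n} {c : 𝕜} {r : ℝ≥0} (hv : ∀ k ≠ j, ‖v k‖₊ ≤ r * ‖v j‖₊) (hvj : v j ≠ 0) (hc : c ≠ 0) :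
    ‖(A *ᵥ v) j / (c * v j) - A j j / c‖₊ ≤ ‖A‖₊ * r / ‖c‖₊ := by
  have hoff : ‖v - Pi.single j (v j)‖₊ ≤ r * ‖v j‖₊ := by
    refine pi_nnnorm_le_iff.2 fun k => ?_
    rcases eq_or_ne k j with rfl | hk
    · simp
    · simpa [hk] using hv k hk
  have : (A *ᵥ v) j / (c * v j) - A j j / c = (A *ᵥ (v - Pi.single j (v j))) j / (c * v j) := by
    simp only [mulVec_sub, mulVec_single, Pi.sub_apply, Pi.smul_apply, col_apply,
      MulOpposite.smul_eq_mul_unop, MulOpposite.unop_op]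
    field_simp
  rw [this, nnnorm_div, nnnorm_mul]
  calc _ ≤ ‖A‖₊ * (r * ‖v j‖₊) / (‖c‖₊ * ‖v j‖₊) := by
        gcongr
        exact (nnnorm_mulVec_apply_le _ _ _).trans (by gcongr)
    _ = ‖A‖₊ * r / ‖c‖₊ := by rw [← mul_assoc, mul_div_mul_right _ _ (nnnorm_ne_zero_iff.2 hvj)]

end Matrix

theorem tendsto_sum_range_of_tendsto_sum_Icc {M : Type*} [AddCommMonoid M] [TopologicalSpace M]
    [ContinuousAdd M] {f : ℕ → M} {L : M}
    (h : Tendsto (fun N => ∑ n ∈ Icc 1 N, f n) atTop (𝓝 L)) :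
    Tendsto (fun N => ∑ n ∈ range N, f n) atTop (𝓝 (f 0 + L)) := by
  refine (tendsto_add_atTop_iff_nat 1).1 ((h.const_add (f 0)).congr fun N => ?_)
  rw [range_eq_Ico, sum_eq_sum_Ico_succ_bot (by omega : 0 < N + 1), zero_add,
    Ico_add_one_right_eq_Icc]

theorem exists_tendsto_ne_zero_of_succ_eq_one_add_mul {z w : ℕ → ℂ} {W : ℂ}
    (hw : Tendsto (fun m => ∑ n ∈ range m, w n) atTop (𝓝 W))
    (hw2 : Summable fun n => ‖w n‖ ^ 2)
    (hz : ∀ᶠ n in atTop, z (n + 1) = (1 + w n) * z n) (hz0 : ∀ᶠ n in atTop, z n ≠ 0) :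
    ∃ c ≠ 0, Tendsto z atTop (𝓝 c) := by
  have hw0 : Tendsto w atTop (𝓝 0) := by
    simpa [sum_range_succ] using ((tendsto_add_atTop_iff_nat 1).2 hw).sub hw
  have hlog : Summable fun n => Complex.log (1 + w n) - w n := by
    refine hw2.of_norm_bounded_eventually_nat ?_
    filter_upwards [(tendsto_norm_zero.comp hw0).eventually_le_const one_half_pos]
      with n (hn : ‖w n‖ ≤ 1 / 2)
    have hn' : (1 - ‖w n‖)⁻¹ ≤ 2 := by
      rw [inv_le_comm₀ (by linarith) two_pos]
      linarith
    calc ‖Complex.log (1 + w n) - w n‖ ≤ ‖w n‖ ^ 2 * (1 - ‖w n‖)⁻¹ / 2 :=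
          Complex.norm_log_one_add_sub_self_le (by linarith)
      _ ≤ ‖w n‖ ^ 2 * 2 / 2 := by gcongr
      _ = ‖w n‖ ^ 2 := by ring
  have hL : Tendsto (fun m => ∑ n ∈ range m, Complex.log (1 + w n)) atTop
      (𝓝 ((∑' n, (Complex.log (1 + w n) - w n)) + W)) := by
    simpa [← sum_add_distrib] using hlog.hasSum.tendsto_sum_nat.add hw
  obtain ⟨N, hN⟩ := eventually_atTop.1 (hz.and hz0)
  set C := ∑ n ∈ range N, Complex.log (1 + w n)
  have hzexp : ∀ m ≥ N, z m = z N * Complex.exp (∑ n ∈ range m, Complex.log (1 + w n) - C) := by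
    intro m hm
    induction m, hm using Nat.le_induction with
    | base => rw [sub_self, Complex.exp_zero, mul_one]
    | succ m hm ih =>
      obtain ⟨hzm, -⟩ := hN m hm
      have h1 : 1 + w m ≠ 0 := left_ne_zero_of_mul (hzm ▸ (hN (m + 1) (by omega)).2)
      rw [hzm, ih, sum_range_succ, add_sub_right_comm, Complex.exp_add, Complex.exp_log h1]
      ring
  refine ⟨z N * Complex.exp (∑' n, (Complex.log (1 + w n) - w n) + W - C),
    mul_ne_zero (hN N le_rfl).2 (Complex.exp_ne_zero _), ?_⟩
  refine Tendsto.congr' (eventually_atTop.2 ⟨N, fun m hm => (hzexp m hm).symm⟩) ?_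
  exact tendsto_const_nhds.mul ((Complex.continuous_exp.tendsto _).comp (hL.sub_const C))

open Matrix in
theorem exists_tendsto_div_pow_of_dominant {ι : Type*} [Fintype ι] [DecidableEq ι]
    {l : ι → ℂ} {A : ℕ → Matrix ι ι ℂ} {y : ℕ → ι → ℂ} {R : ℕ → ℝ≥0} {j : ι} (hlj : l j ≠ 0)
    (hA : Summable fun n => ‖A n‖₊ ^ 2) (hR : Summable fun n => R n ^ 2)
    (hdiag : ∃ L, Tendsto (fun m => ∑ n ∈ range m, A n j j) atTop (𝓝 L))
    (hrec : ∀ᶠ n in atTop, y (n + 1) = (diagonal l + A n) *ᵥ y n)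
    (hdom : ∀ᶠ n in atTop, y n j ≠ 0 ∧ ‖y n‖₊ = ‖y n j‖₊ ∧ ∀ k ≠ j, ‖y n k‖₊ ≤ R n * ‖y n j‖₊) :
    ∃ c ≠ 0, Tendsto (fun n => y n j / l j ^ n) atTop (𝓝 c) ∧
      ∀ k ≠ j, Tendsto (fun n => y n k / l j ^ n) atTop (𝓝 0) := by
  set w : ℕ → ℂ := fun n => (A n *ᵥ y n) j / (l j * y n j)
  have hz : ∀ᶠ n in atTop, y (n + 1) j / l j ^ (n + 1) = (1 + w n) * (y n j / l j ^ n) := by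
    filter_upwards [hrec, hdom] with n hn hdn
    have hyj := hdn.1
    rw [hn, diagonal_add_mulVec_apply]
    simp only [w]
    field_simp
    ring
  have hw2 : Summable fun n => ‖w n‖ ^ 2 := by
    refine (NNReal.summable_coe.2 (hA.div_const (‖l j‖₊ ^ 2))).of_norm_bounded_eventually_nat ?_
    filter_upwards [hdom] with n hdn
    have := pow_le_pow_left₀ zero_le (nnnorm_mulVec_apply_div_le (A n) (l j) hdn.2.1 hdn.1) 2
    simpa [w, div_pow] using NNReal.coe_le_coe.2 this
  obtain ⟨L, hL⟩ := hdiag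
  have hδ : Summable fun n => w n - A n j j / l j := by
    refine (NNReal.summable_coe.2 ((NNReal.summable_mul_of_summable_sq hA hR).div_const
      ‖l j‖₊)).of_norm_bounded_eventually_nat ?_
    filter_upwards [hdom] with n hdn
    exact_mod_cast nnnorm_mulVec_apply_div_sub_div_le (A n) hdn.2.2 hdn.1 hlj
  have hW : Tendsto (fun m => ∑ n ∈ range m, w n) atTop
      (𝓝 (L / l j + ∑' n, (w n - A n j j / l j))) := by
    simpa [sum_div, ← sum_add_distrib] using (hL.div_const (l j)).add hδ.hasSum.tendsto_sum_nat
  obtain ⟨c, hc, hzc⟩ := exists_tendsto_ne_zero_of_succ_eq_one_add_mul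
    (z := fun n => y n j / l j ^ n) hW hw2 hz
    (hdom.mono fun n h => div_ne_zero h.1 (pow_ne_zero _ hlj))
  refine ⟨c, hc, hzc, fun k hk =>
    squeeze_zero_norm' (a := fun n => R n * ‖y n j / l j ^ n‖) ?_ ?_⟩
  · filter_upwards [hdom] with n hdn
    rw [norm_div, norm_div, ← mul_div_assoc]
    gcongr
    exact_mod_cast hdn.2.2 k hk
  · simpa using (NNReal.tendsto_coe.2 (NNReal.tendsto_atTop_zero_of_summable_sq hR)).mul hzc.norm

/-- **Corollary of Coffman's theorem.** Let `Λ = diag(λ_1, …, λ_d)` with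
`|λ_1| > … > |λ_d| > 0` and let `{A_n}` be matrices with `Σ ‖A_n‖² < ∞` (stated via the
entrywise square sum, equivalent to any fixed matrix norm), `Λ + A_n` invertible, and the
partial sums `Σ_{n=1}^N (A_n)_{j,j}` convergent for each `j`. Then every nonzero solution
of `y_{n+1} = (Λ + A_n) y_n` admits an index `j` and `c_j ≠ 0` with `y_{n,j}/λ_j^n → c_j`
and `y_{n,k}/λ_j^n → 0` for `k ≠ j`. -/
theorem coffman_corollary {d : ℕ}
    (l : Fin d → ℂ)
    (hmono : ∀ i j : Fin d, i < j → ‖l j‖ < ‖l i‖)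
    (hpos : ∀ i : Fin d, 0 < ‖l i‖)
    (A : ℕ → Matrix (Fin d) (Fin d) ℂ)
    (hA2 : Summable fun n : ℕ => ∑ i : Fin d, ∑ j : Fin d, ‖A n i j‖ ^ 2)
    (hinv : ∀ n, 1 ≤ n → IsUnit (Matrix.diagonal l + A n))
    (hdiag : ∀ j : Fin d, ∃ L : ℂ,
      Tendsto (fun N => ∑ n ∈ Finset.Icc 1 N, A n j j) atTop (𝓝 L))
    (y : ℕ → Fin d → ℂ) (hy1 : y 1 ≠ 0)
    (hrec : ∀ n, 1 ≤ n → y (n + 1) = (Matrix.diagonal l + A n).mulVec (y n)) :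
    ∃ j : Fin d, ∃ c : ℂ, c ≠ 0 ∧
      Tendsto (fun n => y n j / l j ^ n) atTop (𝓝 c) ∧
      (∀ k : Fin d, k ≠ j → Tendsto (fun n => y n k / l j ^ n) atTop (𝓝 0)) := by
  have hy0 : ∀ n ≥ 1, y n ≠ 0 := Nat.le_induction hy1 fun n hn ih => by
    rw [hrec n hn]
    exact ((Matrix.mulVec_injective_iff_isUnit.2 (hinv n hn)).ne_iff' (Matrix.mulVec_zero _)).2 ih
  have hA : Summable fun n => ‖A n‖₊ ^ 2 :=
    NNReal.summable_of_le (fun n => Matrix.linfty_opNNNorm_sq_le (A n))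
      ((NNReal.summable_coe.1 (by simpa using hA2)).mul_left _)
  have hsup : ∀ n, univ.sup (fun k => ‖y n k‖₊) = ‖y n‖₊ := fun n => (Pi.nnnorm_def _).symm
  have hlam : StrictAnti fun k => ‖l k‖₊ := fun i k h => by
    simpa [← NNReal.coe_lt_coe] using hmono i k h
  have hstep : ∀ᶠ n in atTop, ∀ k,
      nndist ‖y (n + 1) k‖₊ (‖l k‖₊ * ‖y n k‖₊) ≤ ‖A n‖₊ * univ.sup (fun k => ‖y n k‖₊) :=
    Eventually.mono (eventually_ge_atTop 1) fun n hn k => by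
      rw [hsup, hrec n hn]
      exact Matrix.nndist_nnnorm_diagonal_add_mulVec_apply_le _ _ _ k
  have hU : ∀ᶠ n in atTop, 0 < univ.sup (fun k => ‖y n k‖₊) :=
    Eventually.mono (eventually_ge_atTop 1) fun n hn => hsup n ▸ nnnorm_pos.2 (hy0 n hn)
  obtain ⟨j, R, hR, hdom⟩ := exists_dominant_index hlam (fun i => by simpa using hpos i) hA hstep hU
  obtain ⟨L, hL⟩ := hdiag j
  refine ⟨j, exists_tendsto_div_pow_of_dominant (norm_pos_iff.1 (hpos j)) hA hR
    ⟨_, tendsto_sum_range_of_tendsto_sum_Icc hL⟩ (eventually_atTop.2 ⟨1, hrec⟩) ?_⟩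
  filter_upwards [hdom, eventually_ge_atTop 1] with n hdn hn
  rw [hsup] at hdn
  exact ⟨nnnorm_ne_zero_iff.1 (hdn.1 ▸ nnnorm_ne_zero_iff.2 (hy0 n hn)), hdn⟩
end

section
/- Fix ℓ ≥ 1 and ω = (ω_1, …, ω_ℓ) ∈ ℝ^ℓ. Let (δa_n)_{n≥1} be a real sequence such that: (i) for every k ∈ ℤ^ℓ, the partial sums S_N(k) = Σ_{n=1}^N e^{2πi(k·ω)n} δa_n converge to a finite limit as N → ∞; and (ii) for every ε > 0 there is C_ε > 0 with sup_N |S_N(k)| ≤ C_ε e^{ε|k|} for all k ∈ ℤ^ℓ. Let c : ℤ^ℓ → ℂ satisfy |c_k| ≤ C e^{−D|k|} for some constants C, D > 0, and define f_n = Σ_{k∈ℤ^ℓ} c_k e^{2πi(k·ω)n} (the series converging absolutely). Then the partial sums Σ_{n=1}^N f_n δa_n converge to a finite limit as N → ∞. -/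
/-!
Expanding `f_n` and exchanging the finite sum over `n` with the series over `k` writes the
`N`-th partial sum as `Σ_k c_k S_N(k)`. Each term converges as `N → ∞` by (i), and by (ii) with
`ε = D / 2` it is dominated by `C C_{D/2} e^{-(D/2)|k|}`, which is summable over `ℤ^ℓ`;
dominated convergence for series then gives the limit `Σ_k c_k lim_N S_N(k)`.
-/

open Filter Topology

lemma Real.summable_exp_neg_mul_abs_int {ε : ℝ} (hε : 0 < ε) :
    Summable fun n : ℤ => Real.exp (-ε * |(n : ℝ)|) := by
  apply Summable.of_nat_of_neg <;>
  · simp only [Int.cast_natCast, Int.cast_neg, abs_neg, Nat.abs_cast]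
    simpa only [mul_comm, neg_mul, mul_neg] using
      Real.summable_exp_nat_mul_iff.mpr (neg_neg_of_pos hε)

lemma Real.summable_exp_neg_mul_sum_abs (m : ℕ) {ε : ℝ} (hε : 0 < ε) :
    Summable fun k : Fin m → ℤ => Real.exp (-ε * ∑ j, |(k j : ℝ)|) := by
  induction m with
  | zero => exact .of_finite
  | succ m ih =>
    have hprod := (Real.summable_exp_neg_mul_abs_int hε).mul_of_nonneg ih
      (fun _ => Real.exp_nonneg _) (fun _ => Real.exp_nonneg _)
    refine (Equiv.summable_iff (Fin.consEquiv fun _ => ℤ)).mp (hprod.congr fun p => ?_)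
    simp [Fin.consEquiv, Fin.sum_univ_succ, ← Real.exp_add, mul_add]

lemma Complex.norm_exp_two_pi_I_mul_mul_natCast (x : ℝ) (n : ℕ) :
    ‖Complex.exp (2 * Real.pi * Complex.I * x * n)‖ = 1 := by
  simpa [mul_comm, mul_left_comm, mul_assoc] using
    Complex.norm_exp_ofReal_mul_I (2 * Real.pi * x * n)

lemma tendsto_sum_tsum_mul_of_dominated {α ι κ R : Type*} [NormedRing R] [CompleteSpace R]
    {l : Filter α} {s : α → Finset ι} {c : κ → R} {e : κ → ι → R} {a : ι → R} {L : κ → R}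
    {bound : κ → ℝ} (hce : ∀ n, Summable fun k => c k * e k n) (hbound : Summable bound)
    (hL : ∀ k, Tendsto (fun x => ∑ n ∈ s x, e k n * a n) l (𝓝 (L k)))
    (hdom : ∀ x k, ‖c k * ∑ n ∈ s x, e k n * a n‖ ≤ bound k) :
    Tendsto (fun x => ∑ n ∈ s x, (∑' k, c k * e k n) * a n) l (𝓝 (∑' k, c k * L k)) := by
  have hswap : ∀ x, ∑ n ∈ s x, (∑' k, c k * e k n) * a n =
      ∑' k, c k * ∑ n ∈ s x, e k n * a n := by
    intro x
    simp only [Finset.mul_sum, ← mul_assoc]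
    rw [Summable.tsum_finsetSum fun n _ => (hce n).mul_right (a n)]
    exact Finset.sum_congr rfl fun n _ => ((hce n).tsum_mul_right (a n)).symm
  simpa only [hswap] using tendsto_tsum_of_dominated_convergence hbound
    (fun k => (hL k).const_mul (c k)) (Eventually.of_forall hdom)

lemma norm_mul_le_of_le_exp_neg_of_le_exp_half {R : Type*} [NormedRing R] {u v : R}
    {C C' D t : ℝ} (hu : ‖u‖ ≤ C * Real.exp (-D * t)) (hv : ‖v‖ ≤ C' * Real.exp (D / 2 * t)) :
    ‖u * v‖ ≤ C * C' * Real.exp (-(D / 2) * t) :=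
  calc ‖u * v‖ ≤ ‖u‖ * ‖v‖ := norm_mul_le u v
    _ ≤ C * Real.exp (-D * t) * (C' * Real.exp (D / 2 * t)) :=
        mul_le_mul hu hv (norm_nonneg v) ((norm_nonneg u).trans hu)
    _ = C * C' * Real.exp (-(D / 2) * t) := by
        rw [mul_mul_mul_comm, ← Real.exp_add]
        ring_nf

theorem twisted_sums_converge_general (ℓ : ℕ) (ω : Fin ℓ → ℝ) (δa : ℕ → ℝ)
    (h1 : ∀ k : Fin ℓ → ℤ, ∃ L : ℂ,
      Tendsto (fun N => ∑ n ∈ Finset.Icc 1 N,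
        Complex.exp (2 * Real.pi * Complex.I * ((∑ j, (k j : ℝ) * ω j) : ℝ) * (n : ℕ))
          * (δa n : ℂ)) atTop (𝓝 L))
    (h2 : ∀ ε : ℝ, 0 < ε → ∃ C : ℝ, 0 < C ∧ ∀ (k : Fin ℓ → ℤ) (N : ℕ),
      ‖∑ n ∈ Finset.Icc 1 N,
        Complex.exp (2 * Real.pi * Complex.I * ((∑ j, (k j : ℝ) * ω j) : ℝ) * (n : ℕ))
          * (δa n : ℂ)‖ ≤ C * Real.exp (ε * ∑ j, |(k j : ℝ)|))
    (c : (Fin ℓ → ℤ) → ℂ) (C D : ℝ) (hD : 0 < D)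
    (hc : ∀ k : Fin ℓ → ℤ, ‖c k‖ ≤ C * Real.exp (-D * ∑ j, |(k j : ℝ)|))
    (f : ℕ → ℂ)
    (hf : ∀ n : ℕ, f n = ∑' k : Fin ℓ → ℤ,
      c k * Complex.exp (2 * Real.pi * Complex.I * ((∑ j, (k j : ℝ) * ω j) : ℝ) * (n : ℕ))) :
    ∃ L : ℂ, Tendsto (fun N => ∑ n ∈ Finset.Icc 1 N, f n * (δa n : ℂ)) atTop (𝓝 L) := by
  choose L hL using h1
  obtain ⟨C', -, hS⟩ := h2 (D / 2) (half_pos hD)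
  have hce : ∀ n : ℕ, Summable fun k => c k *
      Complex.exp (2 * Real.pi * Complex.I * ((∑ j, (k j : ℝ) * ω j) : ℝ) * (n : ℕ)) := by
    refine fun n => .of_norm_bounded ((Real.summable_exp_neg_mul_sum_abs ℓ hD).mul_left C)
      fun k => ?_
    rw [norm_mul, Complex.norm_exp_two_pi_I_mul_mul_natCast, mul_one]
    exact hc k
  simp only [hf]
  exact ⟨_, tendsto_sum_tsum_mul_of_dominated hce
    ((Real.summable_exp_neg_mul_sum_abs ℓ (half_pos hD)).mul_left (C * C')) hL
    fun N k => norm_mul_le_of_le_exp_neg_of_le_exp_half (hc k) (hS k N)⟩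

/-- **Lemma 2.3 (concrete form).** Fix `ℓ ≥ 1` and `ω ∈ ℝ^ℓ`. Suppose the real sequence
`δa` satisfies: (i) for every `k ∈ ℤ^ℓ` the twisted partial sums
`Σ_{n=1}^N e^{2πi(k·ω)n} δa_n` converge; (ii) for every `ε > 0` there is `C_ε > 0`
bounding all these partial sums by `C_ε e^{ε|k|}`. If `|c_k| ≤ C e^{-D|k|}` and
`f_n = Σ_k c_k e^{2πi(k·ω)n}`, then `Σ_{n=1}^N f_n δa_n` converges as `N → ∞`. -/
theorem twisted_sums_converge (ℓ : ℕ) (hℓ : 1 ≤ ℓ) (ω : Fin ℓ → ℝ) (δa : ℕ → ℝ)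
    (h1 : ∀ k : Fin ℓ → ℤ, ∃ L : ℂ,
      Tendsto (fun N => ∑ n ∈ Finset.Icc 1 N,
        Complex.exp (2 * Real.pi * Complex.I * ((∑ j, (k j : ℝ) * ω j) : ℝ) * (n : ℕ))
          * (δa n : ℂ)) atTop (𝓝 L))
    (h2 : ∀ ε : ℝ, 0 < ε → ∃ C : ℝ, 0 < C ∧ ∀ (k : Fin ℓ → ℤ) (N : ℕ),
      ‖∑ n ∈ Finset.Icc 1 N,
        Complex.exp (2 * Real.pi * Complex.I * ((∑ j, (k j : ℝ) * ω j) : ℝ) * (n : ℕ))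
          * (δa n : ℂ)‖ ≤ C * Real.exp (ε * ∑ j, |(k j : ℝ)|))
    (c : (Fin ℓ → ℤ) → ℂ) (C D : ℝ) (hC : 0 < C) (hD : 0 < D)
    (hc : ∀ k : Fin ℓ → ℤ, ‖c k‖ ≤ C * Real.exp (-D * ∑ j, |(k j : ℝ)|))
    (f : ℕ → ℂ)
    (hf : ∀ n : ℕ, f n = ∑' k : Fin ℓ → ℤ,
      c k * Complex.exp (2 * Real.pi * Complex.I * ((∑ j, (k j : ℝ) * ω j) : ℝ) * (n : ℕ))) :
    ∃ L : ℂ, Tendsto (fun N => ∑ n ∈ Finset.Icc 1 N, f n * (δa n : ℂ)) atTop (𝓝 L) :=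
  twisted_sums_converge_general ℓ ω δa h1 h2 c C D hD hc f hf
end
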